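/- arXiv:1806.03823 — 10 statements merged into one kernel-verified Lean document; each statement's English description precedes it below -/
import Mathlib

section
/- Define Q_k^α to be the number of chains of intervals [A_0,B_0] ⊂ [A_1,B_1] ⊂ ⋯ ⊂ [A_k,B_k] of length k terminating at a fixed interval [A,B] with |B \ A| = α, where intervals are pairs (A',B') with A ⊆ A' ⊆ B' ⊆ B (excluding the case A'=A, B'=B for proper containment), ordered by reverse inclusion of the first component and inclusion of the second. Then Q_k^α = Σ_{i=0}^{k} (-1)^i C(k,i) (1+2(k-i))^α. -/
/-!
Send an interval `[A', B'] ⊆ [A, B]` to `(A'ᶜ, B')`: the order on intervals becomes the product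
order, so a weakly increasing chain (multichain) `[A₀, B₀] ≤ ⋯ ≤ [A_k, B_k] = [A, B]` amounts to
giving, for every element `x`, two monotone Boolean sequences `i ↦ x ∉ A_i` and `i ↦ x ∈ B_i`
ending at `(x ∉ A, x ∈ B)` that are never false together. Outside `B \ A` this pins both sequences
down. For `x ∈ B \ A` one of the two sequences is constantly true, and a monotone Boolean sequence
ending in `true` is determined by the position of its first `true`. If the multichain is required
to stand still at the steps of a set `T`, that position avoids the `|T|` positions just after
those steps, leaving `k + 1 - |T|` sequences and `1 + 2 (k - |T|)` pairs per element. Chains are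
the multichains that stand still at no step, so inclusion–exclusion over `T` gives the formula.
-/

open Finset

namespace IntervalChain

-- The decidability instances are arguments so that the lemma rewrites filters whatever instances
-- they carry (quantifiers over `Fin k` get their own).
theorem card_filter_forall_not {α ι : Type*} [Fintype α] [DecidableEq α] [Fintype ι]
    (S : Finset α) (E : ι → α → Prop) [DecidablePred fun a => ∀ i, ¬ E i a]
    [∀ t : Finset ι, DecidablePred fun a => ∀ i ∈ t, E i a] :
    (#{a ∈ S | ∀ i, ¬ E i a} : ℤ) = ∑ t, (-1 : ℤ) ^ #t * #{a ∈ S | ∀ i ∈ t, E i a} := by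
  classical
  have h := inclusion_exclusion_sum_inf_compl univ (fun i => ({a | E i a} : Finset α))
    (fun a => if a ∈ S then (1 : ℤ) else 0)
  simp only [sum_boole, smul_eq_mul, powerset_univ] at h
  calc (#{a ∈ S | ∀ i, ¬E i a} : ℤ)
      = #{a ∈ univ.inf fun i => ({a | E i a} : Finset α)ᶜ | a ∈ S} := by
        congr 2; ext; simp [Finset.mem_inf, and_comm]
    _ = _ := h
    _ = _ := sum_congr rfl fun t _ => by congr 3; ext; simp [Finset.mem_inf, and_comm]

lemma strictMono_iff_monotone_and_castSucc_ne {β : Type*} [PartialOrder β] {n : ℕ}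
    {f : Fin (n + 1) → β} : StrictMono f ↔ Monotone f ∧ ∀ i : Fin n, f i.castSucc ≠ f i.succ := by
  simp only [Fin.strictMono_iff_lt_succ, Fin.monotone_iff_le_succ, lt_iff_le_and_ne, forall_and]

lemma monotone_iff_forall_monotone_decide_mem {α ι : Type*} [DecidableEq α] [Preorder ι]
    {s : ι → Finset α} :
    Monotone s ↔ ∀ x, Monotone fun i => decide (x ∈ s i) := by
  simp only [Monotone, subset_iff, Bool.le_iff_imp, decide_eq_true_eq]
  exact ⟨fun h x i j hij hx => h hij hx, fun h i j hij x => h x hij⟩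

lemma exists_eq_decide_le {ι : Type*} [LinearOrder ι] [Fintype ι] {f : ι → Bool}
    (hf : Monotone f) {j : ι} (hj : f j = true) : ∃ m, f = fun i => decide (m ≤ i) := by
  have hne : ({i | f i = true} : Finset ι).Nonempty := ⟨j, by simpa using hj⟩
  refine ⟨min' _ hne, funext fun i => ?_⟩
  rw [Bool.eq_iff_iff, decide_eq_true_iff]
  constructor
  · intro hi
    exact min'_le _ _ (by simpa using hi)
  · intro hi
    have hmin := min'_mem _ hne
    simp only [mem_filter, mem_univ, true_and] at hmin
    exact Bool.le_iff_imp.1 (hf hi) hmin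

lemma decide_le_injective {ι : Type*} [PartialOrder ι] [DecidableLE ι] :
    Function.Injective fun (m : ι) (i : ι) => decide (m ≤ i) := fun m m' h =>
  le_antisymm (by simpa using congrFun h m') (by simpa using (congrFun h m).symm)

section MonotoneBoolSeq

variable {k : ℕ}

lemma eq_top_of_monotone_of_apply_zero {f : Fin (k + 1) → Bool} (hf : Monotone f)
    (h0 : f 0 = true) : f = ⊤ :=
  funext fun i => top_unique (h0 ▸ hf (Fin.zero_le i) : true ≤ f i)

def monoBoolSeqs (T : Finset (Fin k)) (b : Bool) : Finset (Fin (k + 1) → Bool) :=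
  {f | Monotone f ∧ f (Fin.last k) = b ∧ ∀ u ∈ T, f u.castSucc = f u.succ}

variable {T : Finset (Fin k)}

lemma top_mem_monoBoolSeqs : ⊤ ∈ monoBoolSeqs T true :=
  mem_filter.2 ⟨mem_univ _, monotone_const, rfl, fun _ _ => rfl⟩

lemma monoBoolSeqs_false : monoBoolSeqs T false = {⊥} := by
  ext f
  simp only [monoBoolSeqs, mem_filter, mem_univ, true_and, mem_singleton]
  constructor
  · rintro ⟨hf, hlast, -⟩
    exact funext fun i => le_bot_iff.1 (hlast ▸ hf (Fin.le_last i) : f i ≤ false)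
  · rintro rfl
    exact ⟨monotone_const, rfl, fun _ _ => rfl⟩

lemma card_monoBoolSeqs_true : #(monoBoolSeqs T true) = k + 1 - #T := by
  have himage : monoBoolSeqs T true = (T.map (Fin.succEmb k))ᶜ.image fun m i => decide (m ≤ i) := by
    ext f
    simp only [monoBoolSeqs, mem_filter, mem_univ, true_and, mem_image, mem_compl, mem_map,
      Fin.coe_succEmb, not_exists, not_and]
    constructor
    · rintro ⟨hf, hlast, hT⟩
      obtain ⟨m, rfl⟩ := exists_eq_decide_le hf hlast
      refine ⟨m, fun u hu hm => ?_, rfl⟩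
      subst hm
      simpa using hT u hu
    · rintro ⟨m, hm, rfl⟩
      refine ⟨fun i j hij => Bool.le_iff_imp.2 ?_, by simp [Fin.le_last], fun u hu => ?_⟩
      · simpa using fun hi => hi.trans hij
      · simpa [Fin.le_castSucc_iff, lt_iff_le_and_ne] using fun _ h => hm u hu h.symm
  rw [himage, card_image_of_injective _ decide_le_injective, card_compl, card_map,
    Fintype.card_fin]

def monoBoolSeqPairs (T : Finset (Fin k)) (b₁ b₂ : Bool) :
    Finset ((Fin (k + 1) → Bool) × (Fin (k + 1) → Bool)) :=
  {pq ∈ monoBoolSeqs T b₁ ×ˢ monoBoolSeqs T b₂ | ∀ i, pq.1 i || pq.2 i}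

lemma card_monoBoolSeqPairs_comm (b₁ b₂ : Bool) :
    #(monoBoolSeqPairs T b₁ b₂) = #(monoBoolSeqPairs T b₂ b₁) :=
  card_equiv (Equiv.prodComm _ _) fun pq => by
    simp [monoBoolSeqPairs, or_comm, and_comm]

lemma monoBoolSeqPairs_false_true : monoBoolSeqPairs T false true = {(⊥, ⊤)} := by
  ext ⟨p, q⟩
  simp only [monoBoolSeqPairs, mem_filter, mem_product, monoBoolSeqs_false, mem_singleton,
    Prod.mk.injEq]
  constructor
  · rintro ⟨⟨rfl, -⟩, h⟩
    exact ⟨rfl, funext fun i => by simpa using h i⟩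
  · rintro ⟨rfl, rfl⟩
    exact ⟨⟨rfl, top_mem_monoBoolSeqs⟩, fun _ => rfl⟩

lemma card_monoBoolSeqPairs_true_true :
    #(monoBoolSeqPairs T true true) = 1 + 2 * (k - #T) := by
  set M := monoBoolSeqs T true
  have hunion : monoBoolSeqPairs T true true = {⊤} ×ˢ M ∪ M ×ˢ {⊤} := by
    ext ⟨p, q⟩
    simp only [monoBoolSeqPairs, mem_filter, mem_product, mem_union, mem_singleton]
    constructor
    · rintro ⟨⟨hp, hq⟩, h⟩
      rcases Bool.or_eq_true_iff.1 (h 0) with h0 | h0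
      · exact .inl ⟨eq_top_of_monotone_of_apply_zero (mem_filter.1 hp).2.1 h0, hq⟩
      · exact .inr ⟨hp, eq_top_of_monotone_of_apply_zero (mem_filter.1 hq).2.1 h0⟩
    · rintro (⟨rfl, hq⟩ | ⟨hp, rfl⟩)
      · exact ⟨⟨top_mem_monoBoolSeqs, hq⟩, fun _ => rfl⟩
      · exact ⟨⟨hp, top_mem_monoBoolSeqs⟩, fun _ => Bool.or_true _⟩
  have hinter : {⊤} ×ˢ M ∩ M ×ˢ {⊤} = ({⊤} ×ˢ {⊤} : Finset ((Fin (k + 1) → Bool) × _)) := by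
    rw [product_inter_product, singleton_inter_of_mem top_mem_monoBoolSeqs,
      inter_singleton_of_mem top_mem_monoBoolSeqs]
  have hM : #M = k + 1 - #T := card_monoBoolSeqs_true
  have hT : #T ≤ k := by simpa using card_le_univ T
  rw [hunion, card_union, hinter]
  simp only [card_product, card_singleton, one_mul, mul_one, hM]
  omega

end MonotoneBoolSeq

section Chains

variable {α : Type*} [Fintype α] [DecidableEq α]

def traceEquiv {ι : Type*} : (ι → Finset α × Finset α) ≃ (α → (ι → Bool) × (ι → Bool)) where
  toFun c x := (fun i => decide (x ∉ (c i).1), fun i => decide (x ∈ (c i).2))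
  invFun g i := (({x | (g x).1 i = false} : Finset α), ({x | (g x).2 i = true} : Finset α))
  left_inv c := by ext <;> simp
  right_inv g := by ext <;> simp

def multichains (k : ℕ) (A B : Finset α) : Finset (Fin (k + 1) → Finset α × Finset α) :=
  {c | (∀ i, (c i).1 ⊆ (c i).2) ∧ Monotone (fun i => ((c i).1ᶜ, (c i).2)) ∧
    c (Fin.last k) = (A, B)}

lemma mem_multichains_filter_iff {k : ℕ} {A B : Finset α} {T : Finset (Fin k)}
    {c : Fin (k + 1) → Finset α × Finset α} :
    c ∈ {c ∈ multichains k A B | ∀ u ∈ T, c u.castSucc = c u.succ} ↔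
      traceEquiv c ∈ Fintype.piFinset fun x =>
        monoBoolSeqPairs T (decide (x ∉ A)) (decide (x ∈ B)) := by
  have hsub : (∀ i, (c i).1 ⊆ (c i).2) ↔
      ∀ x i, (decide (x ∉ (c i).1) || decide (x ∈ (c i).2)) = true := by
    simp only [subset_iff, Bool.or_eq_true, decide_eq_true_eq, ← imp_iff_not_or]
    exact forall_comm
  have hmono : Monotone (fun i => ((c i).1ᶜ, (c i).2)) ↔ ∀ x,
      Monotone (fun i => decide (x ∉ (c i).1)) ∧ Monotone (fun i => decide (x ∈ (c i).2)) := by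
    simp only [monotone_prodMk_iff, monotone_iff_forall_monotone_decide_mem (s := fun i => (c i).1ᶜ),
      monotone_iff_forall_monotone_decide_mem (s := fun i => (c i).2), mem_compl, forall_and]
  have heq (I J : Finset α × Finset α) : I = J ↔
      ∀ x, decide (x ∉ I.1) = decide (x ∉ J.1) ∧ decide (x ∈ I.2) = decide (x ∈ J.2) := by
    simp [Prod.ext_iff, Finset.ext_iff, forall_and]
  simp only [multichains, monoBoolSeqPairs, monoBoolSeqs, traceEquiv, mem_filter, mem_univ,
    true_and, mem_product, Fintype.mem_piFinset, Equiv.coe_fn_mk, hsub, hmono, heq]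
  constructor
  · rintro ⟨⟨hsub, hmono, hlast⟩, hT⟩ x
    exact ⟨⟨⟨(hmono x).1, (hlast x).1, fun u hu => (hT u hu x).1⟩,
      ⟨(hmono x).2, (hlast x).2, fun u hu => (hT u hu x).2⟩⟩, hsub x⟩
  · intro h
    exact ⟨⟨fun x => (h x).2, fun x => ⟨(h x).1.1.1, (h x).1.2.1⟩,
      fun x => ⟨(h x).1.1.2.1, (h x).1.2.2.1⟩⟩,
      fun u hu x => ⟨(h x).1.1.2.2 u hu, (h x).1.2.2.2 u hu⟩⟩

theorem card_multichains_filter {k : ℕ} {A B : Finset α} (hAB : A ⊆ B) (T : Finset (Fin k)) :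
    #{c ∈ multichains k A B | ∀ u ∈ T, c u.castSucc = c u.succ} =
      (1 + 2 * (k - #T)) ^ #(B \ A) := by
  rw [card_equiv traceEquiv fun c => mem_multichains_filter_iff, Fintype.card_piFinset]
  have hcard (x : α) : #(monoBoolSeqPairs T (decide (x ∉ A)) (decide (x ∈ B))) =
      if x ∈ B \ A then 1 + 2 * (k - #T) else 1 := by
    by_cases hA : x ∈ A
    · simp [hA, hAB hA, monoBoolSeqPairs_false_true]
    · by_cases hB : x ∈ B
      · simp [hA, hB, card_monoBoolSeqPairs_true_true]
      · simp [hA, hB, card_monoBoolSeqPairs_comm true false, monoBoolSeqPairs_false_true]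
  simp only [hcard, Fintype.prod_ite_mem, prod_const]

def chains (k : ℕ) (A B : Finset α) : Finset (Fin (k + 1) → Finset α × Finset α) :=
  {c | (∀ i, A ⊆ (c i).1 ∧ (c i).1 ⊆ (c i).2 ∧ (c i).2 ⊆ B) ∧
    (∀ i j : Fin (k + 1), i < j → (c j).1 ⊆ (c i).1 ∧ (c i).2 ⊆ (c j).2 ∧ c i ≠ c j) ∧
    c (Fin.last k) = (A, B)}

theorem chains_eq_filter_multichains (k : ℕ) (A B : Finset α) :
    chains k A B = {c ∈ multichains k A B | ∀ u : Fin k, c u.castSucc ≠ c u.succ} := by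
  ext c
  set d := fun i => ((c i).1ᶜ, (c i).2)
  have hlt (i j) : d i < d j ↔ (c j).1 ⊆ (c i).1 ∧ (c i).2 ⊆ (c j).2 ∧ c i ≠ c j := by
    have hd : d i = d j ↔ c i = c j := by simp [d, Prod.ext_iff]
    rw [lt_iff_le_and_ne, ne_eq, hd, ← and_assoc]
    simp [d, Prod.mk_le_mk]
  have hne (u : Fin k) : d u.castSucc ≠ d u.succ ↔ c u.castSucc ≠ c u.succ := by
    simp [d, Prod.ext_iff]
  simp only [chains, multichains, ← hlt, mem_filter, mem_univ, true_and, ← hne]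
  rw [← StrictMono, strictMono_iff_monotone_and_castSucc_ne]
  constructor
  · rintro ⟨hbounds, ⟨hmono, hne⟩, hlast⟩
    exact ⟨⟨fun i => (hbounds i).2.1, hmono, hlast⟩, hne⟩
  · rintro ⟨⟨hsub, hmono, hlast⟩, hne⟩
    refine ⟨fun i => ?_, ⟨hmono, hne⟩, hlast⟩
    have hle := hmono (Fin.le_last i)
    simp only [hlast, Prod.mk_le_mk, compl_le_compl_iff_le] at hle
    exact ⟨hle.1, hsub i, hle.2⟩

theorem card_chains (k : ℕ) {A B : Finset α} (hAB : A ⊆ B) :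
    (#(chains k A B) : ℤ) = ∑ i ∈ range (k + 1),
      (-1 : ℤ) ^ i * k.choose i * (1 + 2 * ((k - i : ℕ) : ℤ)) ^ #(B \ A) := by
  rw [chains_eq_filter_multichains, card_filter_forall_not]
  simp only [card_multichains_filter hAB, Nat.cast_pow]
  rw [← powerset_univ, sum_powerset_apply_card
    (fun m => (-1 : ℤ) ^ m * ((1 + 2 * (k - m) : ℕ) : ℤ) ^ #(B \ A)), card_univ, Fintype.card_fin]
  refine sum_congr rfl fun i _ => ?_
  push_cast
  ring

end Chains

end IntervalChain

/-- The number of chains of intervals of length `k` terminating at a fixed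
interval `[A,B]` with `|B \ A| = α` equals `∑_{i=0}^{k} (-1)^i C(k,i) (1+2(k-i))^α`.
An interval contained in `[A,B]` is a pair `(A',B')` with `A ⊆ A' ⊆ B' ⊆ B`; intervals are
ordered by `(P,Q) ≤ (P',Q') ↔ P' ⊆ P ∧ Q ⊆ Q'`, and a chain of length `k` terminating at
`[A,B]` is a strictly increasing sequence of `k+1` intervals ending at `(A,B)`. -/
theorem interval_chain_count (n k α : ℕ) (A B : Finset (Fin n)) (hAB : A ⊆ B)
    (hα : (B \ A).card = α) :
    (((Finset.univ : Finset (Fin (k + 1) → Finset (Fin n) × Finset (Fin n))).filter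
        (fun c =>
          (∀ i, A ⊆ (c i).1 ∧ (c i).1 ⊆ (c i).2 ∧ (c i).2 ⊆ B) ∧
          (∀ i j : Fin (k + 1), i < j →
            (c j).1 ⊆ (c i).1 ∧ (c i).2 ⊆ (c j).2 ∧ c i ≠ c j) ∧
          c (Fin.last k) = (A, B))).card : ℤ)
      = ∑ i ∈ Finset.range (k + 1),
          (-1 : ℤ) ^ i * (k.choose i) * (1 + 2 * ((k - i : ℕ) : ℤ)) ^ α := by
  exact hα ▸ IntervalChain.card_chains k hAB
end

section
/- The numbers Q_k^α = Σ_{i=0}^{k} (-1)^i C(k,i)(1+2(k-i))^α satisfy the recurrence Q_k^α = Σ_{i=0}^{α} C(α,i) [Σ_{j=0}^{α-i} C(α-i,j) Q_{k-1}^j] − Q_{k-1}^α for k ≥ 1. -/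
/-!
`Q k α` is the `k`-th forward difference with step `2` of `x ↦ x ^ α`, evaluated at `1`.
Since `Δ^[k+1] f = Δ^[k] (f (· + 2)) - Δ^[k] f`, the recurrence follows by expanding
`(x + 2) ^ α = (1 + (x + 1)) ^ α` with the binomial theorem twice and using the linearity of `Δ^[k]`.
-/

/-- `Q k α = ∑_{i=0}^{k} (-1)^i C(k,i) (1+2(k-i))^α`. -/
def Q (k α : ℕ) : ℤ :=
  ∑ i ∈ Finset.range (k + 1), (-1 : ℤ) ^ i * (k.choose i) * (1 + 2 * ((k - i : ℕ) : ℤ)) ^ α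

open Finset fwdDiff

theorem Q_eq_fwdDiff_iter (k α : ℕ) : Q k α = Δ_[2] ^[k] (· ^ α : ℤ → ℤ) 1 := by
  rw [fwdDiff_iter_eq_sum_shift, Q, ← sum_range_reflect]
  refine sum_congr rfl fun m hm => ?_
  have hmk : m ≤ k := Nat.lt_succ_iff.mp (mem_range.mp hm)
  rw [add_tsub_cancel_right, Nat.sub_sub_self hmk, Nat.choose_symm hmk, smul_eq_mul, nsmul_eq_mul]
  ring

theorem fwdDiff_iter_succ_apply_eq_sub {M G : Type*} [AddCommMonoid M] [AddCommGroup G]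
    (h : M) (f : M → G) (n : ℕ) (y : M) :
    Δ_[h] ^[n + 1] f y = Δ_[h] ^[n] (fun r ↦ f (r + h)) y - Δ_[h] ^[n] f y := by
  rw [fwdDiff_iter_comp_add, Function.iterate_succ_apply']
  rfl

theorem add_two_pow_eq_sum_choose_mul_sum_choose_mul_pow {R : Type*} [CommSemiring R]
    (x : R) (α : ℕ) :
    (x + 2) ^ α = ∑ i ∈ range (α + 1), (α.choose i : R) *
      ∑ j ∈ range (α - i + 1), ((α - i).choose j : R) * x ^ j := by
  rw [show x + 2 = 1 + (x + 1) by ring, add_pow]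
  refine sum_congr rfl fun i _ => ?_
  rw [add_pow, one_pow, one_mul]
  simp only [one_pow, mul_one, mul_comm]

/-- the numbers `Q k α` satisfy the recurrence
`Q_k^α = ∑_{i=0}^{α} C(α,i) [∑_{j=0}^{α-i} C(α-i,j) Q_{k-1}^j] − Q_{k-1}^α` for `k ≥ 1`. -/
theorem Q_recurrence (k α : ℕ) (hk : 1 ≤ k) :
    Q k α =
      (∑ i ∈ Finset.range (α + 1), (α.choose i : ℤ) *
        ∑ j ∈ Finset.range (α - i + 1), ((α - i).choose j : ℤ) * Q (k - 1) j)
      - Q (k - 1) α := by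
  obtain ⟨n, rfl⟩ := Nat.exists_eq_add_of_le' hk
  have hshift : (fun r : ℤ ↦ (r + 2) ^ α) = ∑ i ∈ range (α + 1), (α.choose i : ℤ) •
      ∑ j ∈ range (α - i + 1), ((α - i).choose j : ℤ) • (· ^ j : ℤ → ℤ) := by
    ext r
    simp only [add_two_pow_eq_sum_choose_mul_sum_choose_mul_pow, Finset.sum_apply, Pi.smul_apply,
      smul_eq_mul]
  simp only [Nat.add_sub_cancel, Q_eq_fwdDiff_iter, fwdDiff_iter_succ_apply_eq_sub, hshift,
    fwdDiff_iter_finsetSum, fwdDiff_iter_const_smul, Finset.sum_apply, Pi.smul_apply, smul_eq_mul]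
end

section
/- Define b_{r,l} = Σ_{j=0}^{r−1} (−1)^j C(r−1,j)[(2r−2j)^l − (2r−2j−1)^l] for r ≥ 1. Then for all 1 ≤ r and 1 ≤ l, the recurrence Σ_{i=1}^{l} 2^i C(l,i) b_{r,l−i} = b_{r+1,l} holds. -/
/-!
Reindexing `j ↦ r - 1 - j` shows that `b_{n+1,l}` is the `n`-th forward difference at `1` of
`h_l(m) = (2m)^l - (2m-1)^l`. The binomial theorem, applied at `x = 2m` and `x = 2m - 1`, gives
`Δ h_l = ∑_{i=1}^{l} 2^i C(l,i) h_{l-i}`, so by linearity of `Δⁿ` the left-hand side is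
`Δⁿ (Δ h_l) (1) = Δⁿ⁺¹ h_l (1) = b_{n+2,l}`.
-/

/-- Entries of the `f`-vector transformation matrix of the interval subdivision:
`b_{r,l} = ∑_{j=0}^{r−1} (−1)^j C(r−1,j)[(2r−2j)^l − (2r−2j−1)^l]` for `r ≥ 1`. -/
def bEntry (r l : ℕ) : ℤ :=
  ∑ j ∈ Finset.range r, (-1 : ℤ) ^ j * ((r - 1).choose j) *
    ((2 * ((r - j : ℕ) : ℤ)) ^ l - (2 * ((r - j : ℕ) : ℤ) - 1) ^ l)

open Finset fwdDiff

theorem add_pow_sub_pow_eq_sum_Icc {R : Type*} [CommRing R] (x y : R) (l : ℕ) :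
    (x + y) ^ l - x ^ l = ∑ i ∈ Icc 1 l, y ^ i * (l.choose i : R) * x ^ (l - i) := by
  rw [add_comm x, add_pow, range_eq_Ico, sum_eq_sum_Ico_succ_bot l.succ_pos, Nat.succ_eq_add_one,
    zero_add, Ico_add_one_right_eq_Icc]
  simp only [pow_zero, Nat.sub_zero, Nat.choose_zero_right, Nat.cast_one, one_mul, mul_one,
    add_sub_cancel_left]
  exact sum_congr rfl fun i _ => mul_right_comm _ _ _

def evenOddPowDiff (l m : ℕ) : ℤ := (2 * (m : ℤ)) ^ l - (2 * (m : ℤ) - 1) ^ l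

theorem bEntry_succ_eq_fwdDiff_iter (n l : ℕ) :
    bEntry (n + 1) l = (Δ_[1])^[n] (evenOddPowDiff l) 1 := by
  rw [fwdDiff_iter_eq_sum_shift, bEntry, ← sum_range_reflect]
  refine sum_congr rfl fun k hk => ?_
  have hkn : k ≤ n := Nat.lt_succ_iff.mp (mem_range.mp hk)
  have hshift : n + 1 - (n - k) = 1 + k • 1 := by rw [smul_eq_mul, mul_one]; omega
  rw [Nat.add_sub_cancel, Nat.choose_symm hkn, zsmul_eq_mul, evenOddPowDiff, hshift]
  push_cast
  rfl

theorem fwdDiff_evenOddPowDiff (l : ℕ) :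
    Δ_[1] (evenOddPowDiff l) = ∑ i ∈ Icc 1 l, ((2 : ℤ) ^ i * l.choose i) • evenOddPowDiff (l - i) := by
  ext m
  have hEven := add_pow_sub_pow_eq_sum_Icc (2 * (m : ℤ)) 2 l
  have hOdd := add_pow_sub_pow_eq_sum_Icc (2 * (m : ℤ) - 1) 2 l
  simp only [Finset.sum_apply, Pi.smul_apply, smul_eq_mul, evenOddPowDiff, mul_sub,
    sum_sub_distrib, ← hEven, ← hOdd, fwdDiff]
  push_cast
  ring

theorem bEntry_recurrence_general (r l : ℕ) (hr : 1 ≤ r) :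
    ∑ i ∈ Finset.Icc 1 l, (2 : ℤ) ^ i * (l.choose i) * bEntry r (l - i)
      = bEntry (r + 1) l := by
  obtain ⟨n, rfl⟩ := Nat.exists_eq_add_of_le' hr
  simp only [bEntry_succ_eq_fwdDiff_iter]
  rw [Function.iterate_succ_apply, fwdDiff_evenOddPowDiff, fwdDiff_iter_finsetSum,
    Finset.sum_apply]
  simp only [fwdDiff_iter_const_smul, Pi.smul_apply, smul_eq_mul]

/-- for all `r ≥ 1` and `l ≥ 1`,
`∑_{i=1}^{l} 2^i C(l,i) b_{r,l−i} = b_{r+1,l}`. -/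
theorem bEntry_recurrence (r l : ℕ) (hr : 1 ≤ r) (hl : 1 ≤ l) :
    ∑ i ∈ Finset.Icc 1 l, (2 : ℤ) ^ i * (l.choose i) * bEntry r (l - i)
      = bEntry (r + 1) l :=
  bEntry_recurrence_general r l hr
end

section
/- For d ≥ 1, 1 ≤ s ≤ d, and 0 ≤ r ≤ d−1, the symmetry B^+(d,s,r) = B^+(d, d−s+1, d−r−1) holds, where B^+(d,s,r) counts signed permutations σ ∈ B_d with σ_1 = s, σ_d > 0, and exactly r type-B descents. -/
/-- The signed value at position `i` of `f : Fin d → Fin d × Bool`. -/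
def BVal (d : ℕ) (f : Fin d → Fin d × Bool) (i : Fin d) : ℤ :=
  if (f i).2 then ((f i).1 : ℤ) + 1 else -(((f i).1 : ℤ) + 1)

/-- `σ_{k+1}` in one-line notation (`k` is `0`-based); `0` out of range. -/
def sval (d : ℕ) (f : Fin d → Fin d × Bool) (k : ℕ) : ℤ :=
  if h : k < d then BVal d f ⟨k, h⟩ else 0

/-- `f` encodes a signed permutation of `{1,…,d}`. -/
def IsSignedPerm (d : ℕ) (f : Fin d → Fin d × Bool) : Prop :=
  Function.Injective fun i => (f i).1

instance (d : ℕ) (f : Fin d → Fin d × Bool) : Decidable (IsSignedPerm d f) := by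
  unfold IsSignedPerm; infer_instance

/-- The type-B descent number: `|{i ∈ [0,d−1] : σ_i > σ_{i+1}}|` with `σ_0 = 0`. -/
def desB (d : ℕ) (f : Fin d → Fin d × Bool) : ℕ :=
  ((Finset.range d).filter fun i =>
    sval d f i < if i = 0 then (0 : ℤ) else sval d f (i - 1)).card

/-- Signed permutations with `σ_1 = j` and `σ_d > 0`. -/
def BplusSet (d : ℕ) (j : ℤ) : Finset (Fin d → Fin d × Bool) :=
  Finset.univ.filter fun f => IsSignedPerm d f ∧ sval d f 0 = j ∧ 0 < sval d f (d - 1)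

/-- Signed permutations with `σ_1 = j` and `σ_d < 0`. -/
def BminusSet (d : ℕ) (j : ℤ) : Finset (Fin d → Fin d × Bool) :=
  Finset.univ.filter fun f => IsSignedPerm d f ∧ sval d f 0 = j ∧ sval d f (d - 1) < 0


/-!
The map `σ ↦ σ̄` replaces each value `σᵢ` by `±(d + 1) - σᵢ`, keeping its sign. Within one sign class
this reverses the order, while between classes the order is preserved; hence at each position
`i ≥ 2` the number of descents of `σ` and `σ̄` together is `1 + [σ_{i-1} > 0] - [σᵢ > 0]`. Summing
telescopes to `d - 1 + [σ₁ > 0] - [σ_d > 0] = d - 1`, and position `1` is an ascent of both since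
`σ₁, σ̄₁ > 0`.
-/

open Finset

def bar (d : ℕ) (f : Fin d → Fin d × Bool) : Fin d → Fin d × Bool :=
  fun i => ((f i).1.rev, (f i).2)

def barVal (n a : ℤ) : ℤ :=
  (if 0 < a then n + 1 else -(n + 1)) - a

lemma barVal_pos_iff {n a : ℤ} (ha : |a| ≤ n) : 0 < barVal n a ↔ 0 < a := by
  rw [abs_le] at ha
  unfold barVal
  split_ifs <;> omega

/-- `barVal n` is decreasing on `[1, n]` and on `[-n, 0]`, and preserves the order across them. -/
lemma ite_lt_add_ite_barVal_lt {n a b : ℤ} (ha : |a| ≤ n) (hb : |b| ≤ n) (hab : a ≠ b) :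
    ((if b < a then 1 else 0) + if barVal n b < barVal n a then 1 else 0 : ℤ)
      = 1 + (if 0 < a then 1 else 0) - if 0 < b then 1 else 0 := by
  rw [abs_le] at ha hb
  unfold barVal
  split_ifs <;> omega

section SignedPerm

variable {d : ℕ} {f : Fin d → Fin d × Bool}

lemma bar_bar : bar d (bar d f) = f := by
  funext i; simp [bar]

lemma IsSignedPerm.bar (hf : IsSignedPerm d f) : IsSignedPerm d (bar d f) :=
  fun _ _ h => hf (Fin.rev_injective h)

lemma abs_sval_le (k : ℕ) : |sval d f k| ≤ d := by
  unfold sval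
  split_ifs with hk
  · have := (f ⟨k, hk⟩).1.isLt
    rw [abs_le]
    unfold BVal
    split_ifs <;> omega
  · simp

lemma sval_bar {k : ℕ} (hk : k < d) : sval d (bar d f) k = barVal d (sval d f k) := by
  have hrev : (((f ⟨k, hk⟩).1.rev : ℕ) : ℤ) = d - ((f ⟨k, hk⟩).1 : ℤ) - 1 := by
    rw [Fin.val_rev]; have := (f ⟨k, hk⟩).1.isLt; omega
  simp only [sval, dif_pos hk, BVal, bar, barVal]
  by_cases h : (f ⟨k, hk⟩).2 <;> simp only [h, ↓reduceIte] <;> split_ifs <;> omega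

lemma IsSignedPerm.sval_ne (hf : IsSignedPerm d f) {i j : ℕ} (hi : i < d) (hj : j < d)
    (hij : i ≠ j) : sval d f i ≠ sval d f j := by
  have hne : ((f ⟨i, hi⟩).1 : ℤ) ≠ (f ⟨j, hj⟩).1 := fun h =>
    hij (Fin.mk.inj_iff.mp (hf (Fin.ext (by exact_mod_cast h))))
  simp only [sval, dif_pos hi, dif_pos hj, BVal]
  split_ifs <;> omega

lemma desB_eq_sum :
    (desB d f : ℤ) = ∑ i ∈ range d,
      if sval d f i < (if i = 0 then 0 else sval d f (i - 1)) then 1 else 0 := by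
  rw [desB, card_filter, Nat.cast_sum]
  push_cast
  rfl

lemma desB_add_desB_bar (hf : IsSignedPerm d f) (hd : 1 ≤ d) (hfirst : 0 < sval d f 0)
    (hlast : 0 < sval d f (d - 1)) : (desB d f : ℤ) + desB d (bar d f) = d - 1 := by
  obtain ⟨m, rfl⟩ : ∃ m, d = m + 1 := ⟨d - 1, by omega⟩
  set pos : ℕ → ℤ := fun i => if 0 < sval (m + 1) f i then 1 else 0
  have hfirst_bar : 0 < sval (m + 1) (bar (m + 1) f) 0 := by
    rwa [sval_bar (by omega), barVal_pos_iff (abs_sval_le 0)]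
  have hstep : ∀ i ∈ range m,
      ((if sval (m + 1) f (i + 1) < sval (m + 1) f i then 1 else 0) +
        if sval (m + 1) (bar (m + 1) f) (i + 1) < sval (m + 1) (bar (m + 1) f) i then 1 else 0 : ℤ)
        = 1 + (pos i - pos (i + 1)) := by
    intro i hi
    rw [mem_range] at hi
    rw [sval_bar (by omega), sval_bar (by omega),
      ite_lt_add_ite_barVal_lt (abs_sval_le i) (abs_sval_le (i + 1))
        (hf.sval_ne (by omega) (by omega) (by omega))]
    ring
  rw [desB_eq_sum, desB_eq_sum, sum_range_succ', sum_range_succ', add_add_add_comm,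
    ← sum_add_distrib]
  simp only [Nat.add_sub_cancel, if_true, Nat.succ_ne_zero, if_false, not_lt.mpr hfirst.le,
    not_lt.mpr hfirst_bar.le]
  rw [sum_congr rfl hstep, sum_add_distrib, sum_range_sub', sum_const, card_range]
  rw [Nat.add_sub_cancel] at hlast
  simp only [pos, hfirst, hlast, if_true]
  simp

lemma mem_BplusSet {s : ℤ} :
    f ∈ BplusSet d s ↔ IsSignedPerm d f ∧ sval d f 0 = s ∧ 0 < sval d f (d - 1) := by
  simp [BplusSet]

lemma pos_of_mem_BplusSet {s : ℤ} (hf : f ∈ BplusSet d s) : 0 < d := by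
  by_contra! h
  simp [mem_BplusSet, sval, show d = 0 by omega] at hf

lemma bar_mem_BplusSet {s : ℤ} (hs : 0 < s) (hf : f ∈ BplusSet d s) :
    bar d f ∈ BplusSet d (d + 1 - s) := by
  have hd := pos_of_mem_BplusSet hf
  obtain ⟨hperm, hfirst, hlast⟩ := mem_BplusSet.mp hf
  refine mem_BplusSet.mpr ⟨hperm.bar, ?_, ?_⟩
  · rw [sval_bar hd, barVal, hfirst, if_pos hs]
  · rwa [sval_bar (by omega), barVal_pos_iff (abs_sval_le _)]

lemma desB_bar {s : ℤ} (hs : 0 < s) (hf : f ∈ BplusSet d s) :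
    desB d (bar d f) = d - 1 - desB d f := by
  obtain ⟨hperm, hfirst, hlast⟩ := mem_BplusSet.mp hf
  have := desB_add_desB_bar hperm (pos_of_mem_BplusSet hf) (hfirst ▸ hs) hlast
  omega

end SignedPerm

theorem Bplus_symmetry_general (d s r : ℕ) (hs : 1 ≤ s) (hsd : s ≤ d)
    (hr : r ≤ d - 1) :
    ((BplusSet d (s : ℤ)).filter (fun f => desB d f = r)).card
      = ((BplusSet d ((d - s + 1 : ℕ) : ℤ)).filter (fun f => desB d f = d - r - 1)).card := by
  have hcomp : ((d - s + 1 : ℕ) : ℤ) = d + 1 - s := by omega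
  have hcomp_pos : (0 : ℤ) < d + 1 - s := by omega
  refine card_nbij' (bar d) (bar d) ?_ ?_ (fun f _ => bar_bar) (fun f _ => bar_bar)
  · intro f hf
    simp only [mem_coe, mem_filter, hcomp] at hf ⊢
    exact ⟨bar_mem_BplusSet (by omega) hf.1, by rw [desB_bar (by omega) hf.1, hf.2]; omega⟩
  · intro f hf
    simp only [mem_coe, mem_filter, hcomp] at hf ⊢
    have hmem := bar_mem_BplusSet hcomp_pos hf.1
    rw [sub_sub_cancel] at hmem
    exact ⟨hmem, by rw [desB_bar hcomp_pos hf.1, hf.2]; omega⟩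

/-- for `d ≥ 1`, `1 ≤ s ≤ d` and `0 ≤ r ≤ d−1`, the symmetry
`B^+(d,s,r) = B^+(d, d−s+1, d−r−1)` holds, where `B^+(d,s,r)` counts signed
permutations `σ ∈ B_d` with `σ_1 = s`, `σ_d > 0` and exactly `r` type-B descents. -/
theorem Bplus_symmetry (d s r : ℕ) (hd : 1 ≤ d) (hs : 1 ≤ s) (hsd : s ≤ d)
    (hr : r ≤ d - 1) :
    ((BplusSet d (s : ℤ)).filter (fun f => desB d f = r)).card
      = ((BplusSet d ((d - s + 1 : ℕ) : ℤ)).filter (fun f => desB d f = d - r - 1)).card :=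
  Bplus_symmetry_general d s r hs hsd hr
end

section
/- For d ≥ 2 and 1 ≤ s ≤ d, the polynomials B^+_{d,s}(t) satisfy the recurrence B^+_{d,s}(t) = t·Σ_{j=1}^{s−1} B^+_{d−1,j}(t) + Σ_{j=s}^{d−1} B^+_{d−1,j}(t) + Σ_{j=1}^{d−1} B^+_{d−1,−j}(t), with initial conditions B^+_{1,1}(t) = 1 and B^+_{1,−1}(t) = 0. -/
open Polynomial

/-- The `j`-Eulerian polynomial of type `B^+`:
`B^+_{d,j}(t) = ∑_{σ ∈ B_d, σ_1=j, σ_d>0} t^{des_B(σ)}`. -/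
noncomputable def BplusPoly (d : ℕ) (j : ℤ) : Polynomial ℝ :=
  ∑ f ∈ BplusSet d j, X ^ desB d f

/-- The `j`-Eulerian polynomial of type `B^-`:
`B^−_{d,j}(t) = ∑_{σ ∈ B_d, σ_1=j, σ_d<0} t^{des_B(σ)}`. -/
noncomputable def BminusPoly (d : ℕ) (j : ℤ) : Polynomial ℝ :=
  ∑ f ∈ BminusSet d j, X ^ desB d f

/-- The `j`-Eulerian polynomial of type `B`:
`B_{d,j}(t) = ∑_{σ ∈ B_d, σ_1=j} t^{des_B(σ)}`. -/
noncomputable def BPoly (d : ℕ) (j : ℤ) : Polynomial ℝ :=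
  ∑ f ∈ Finset.univ.filter (fun f : Fin d → Fin d × Bool =>
      IsSignedPerm d f ∧ sval d f 0 = j), X ^ desB d f

/-! Write `σ ∈ B_d` with `σ_1 = s > 0` as `s` followed by a signed permutation `σ'` of the
remaining values; relabelling them to `{±1, …, ±(d-1)}` gives `σ' ∈ B_{d-1}` with the same
relative order, the same signs, and hence the same descents from position `2` on and the same
sign of the last entry. Only the first comparison changes: `σ` has no descent at `0` and has one
at `1` iff `σ_2 < s`, while `σ'` has one at `0` iff `σ'_1 < 0`. So
`des_B σ = des_B σ' + [0 < σ'_1 < s]`, and summing over the value `j = σ'_1` gives the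
recurrence.
-/

open Polynomial Finset

lemma sum_erase_zero_Icc_eq_add {R : Type*} [CommSemiring R] (x : R) (F : ℤ → R) {n s : ℤ}
    (hs : 1 ≤ s) (hsn : s ≤ n + 1) :
    ∑ j ∈ (Icc (-n) n).erase 0, x ^ (if 0 < j ∧ j < s then 1 else 0) * F j =
      x * ∑ j ∈ Icc 1 (s - 1), F j + ∑ j ∈ Icc s n, F j + ∑ j ∈ Icc 1 n, F (-j) := by
  have hsplit : (Icc (-n) n).erase 0 = Icc (-n) (-1) ∪ (Icc 1 (s - 1) ∪ Icc s n) := by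
    ext j
    simp only [mem_erase, mem_Icc, mem_union]
    omega
  have hdisj₁ : Disjoint (Icc (-n) (-1)) (Icc 1 (s - 1) ∪ Icc s n) :=
    disjoint_left.2 fun j h₁ h₂ => by simp only [mem_Icc, mem_union] at h₁ h₂; omega
  have hdisj₂ : Disjoint (Icc 1 (s - 1)) (Icc s n) :=
    disjoint_left.2 fun j h₁ h₂ => by simp only [mem_Icc] at h₁ h₂; omega
  have hneg : ∑ j ∈ Icc (-n) (-1), x ^ (if 0 < j ∧ j < s then 1 else 0) * F j =
      ∑ j ∈ Icc 1 n, F (-j) := by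
    refine sum_nbij' Neg.neg Neg.neg ?_ ?_ (fun j _ => neg_neg j) (fun j _ => neg_neg j) ?_ <;>
      intro j hj <;> simp only [mem_Icc] at hj ⊢
    · omega
    · omega
    · rw [if_neg (by omega), pow_zero, one_mul, neg_neg]
  have hlow : ∑ j ∈ Icc 1 (s - 1), x ^ (if 0 < j ∧ j < s then 1 else 0) * F j =
      x * ∑ j ∈ Icc 1 (s - 1), F j := by
    rw [mul_sum]
    refine sum_congr rfl fun j hj => ?_
    rw [mem_Icc] at hj
    rw [if_pos (by omega), pow_one]
  have hhigh :
      ∑ j ∈ Icc s n, x ^ (if 0 < j ∧ j < s then 1 else 0) * F j = ∑ j ∈ Icc s n, F j := by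
    refine sum_congr rfl fun j hj => ?_
    rw [mem_Icc] at hj
    rw [if_neg (by omega), pow_zero, one_mul]
  rw [hsplit, sum_union hdisj₁, sum_union hdisj₂, hneg, hlow, hhigh, add_comm]

def shiftAbove (p v : ℤ) : ℤ :=
  if p < v then v + 1 else if v < -p then v - 1 else v

lemma shiftAbove_strictMono (p : ℤ) : StrictMono (shiftAbove p) := by
  intro a b hab
  unfold shiftAbove
  split_ifs <;> omega

lemma shiftAbove_zero {p : ℤ} (hp : 0 ≤ p) : shiftAbove p 0 = 0 := by
  unfold shiftAbove
  split_ifs <;> omega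

lemma shiftAbove_pos_iff {p : ℤ} (hp : 0 ≤ p) (v : ℤ) : 0 < shiftAbove p v ↔ 0 < v := by
  unfold shiftAbove
  split_ifs <;> omega

lemma shiftAbove_lt_succ_iff (p v : ℤ) : shiftAbove p v < p + 1 ↔ v < p + 1 := by
  unfold shiftAbove
  split_ifs <;> omega

lemma Fin.val_succAbove {n : ℕ} (p : Fin (n + 1)) (a : Fin n) :
    (p.succAbove a : ℕ) = if (a : ℕ) < p then (a : ℕ) else (a : ℕ) + 1 := by
  unfold Fin.succAbove
  split_ifs with h <;> simp only [Fin.lt_def, Fin.val_castSucc, Fin.val_succ] at h ⊢ <;> omega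

lemma sval_ne_zero {d k : ℕ} (f : Fin d → Fin d × Bool) (hk : k < d) : sval d f k ≠ 0 := by
  simp only [sval, hk, dite_true, BVal]
  split_ifs <;> omega

lemma sval_mem_erase_Icc {d k : ℕ} (f : Fin d → Fin d × Bool) (hk : k < d) :
    sval d f k ∈ (Icc (-(d : ℤ)) d).erase 0 := by
  have hlt := (f ⟨k, hk⟩).1.isLt
  simp only [mem_erase, mem_Icc, ne_eq, sval_ne_zero f hk, not_false_eq_true, true_and]
  simp only [sval, hk, dite_true, BVal]
  split_ifs <;> omega

lemma desB_succ {d : ℕ} (f : Fin (d + 1) → Fin (d + 1) × Bool) :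
    desB (d + 1) f = (if sval (d + 1) f 0 < 0 then 1 else 0) +
      #{i ∈ range d | sval (d + 1) f (i + 1) < sval (d + 1) f i} := by
  rw [desB, card_filter, card_filter, sum_range_succ', add_comm]
  simp

-- `p : Fin (e + 1)` stands for the value `p + 1`; the remaining entries of `g` keep their signs
-- and their absolute values above `p` move up by one.
def prepend {e : ℕ} (p : Fin (e + 1)) (g : Fin e → Fin e × Bool) :
    Fin (e + 1) → Fin (e + 1) × Bool :=
  Fin.cons (p, true) fun i => (p.succAbove (g i).1, (g i).2)

section Prepend

variable {e : ℕ} (p : Fin (e + 1)) (g : Fin e → Fin e × Bool)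

lemma sval_prepend_zero : sval (e + 1) (prepend p g) 0 = p + 1 := by
  simp [sval, BVal, prepend]

lemma sval_prepend_succ (k : ℕ) :
    sval (e + 1) (prepend p g) (k + 1) = shiftAbove p (sval e g k) := by
  by_cases hk : k < e
  · simp only [sval, hk, Nat.add_lt_add_iff_right, dite_true]
    rw [show (⟨k + 1, by omega⟩ : Fin (e + 1)) = Fin.succ ⟨k, hk⟩ from rfl]
    simp only [BVal, prepend, Fin.cons_succ, Fin.val_succAbove]
    push_cast
    unfold shiftAbove
    split_ifs <;> omega
  · simp [sval, hk, shiftAbove_zero]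

lemma isSignedPerm_prepend_iff : IsSignedPerm (e + 1) (prepend p g) ↔ IsSignedPerm e g := by
  have hfst : (fun i => (prepend p g i).1) = Fin.cons p (p.succAbove ∘ fun i => (g i).1) := by
    funext i
    cases i using Fin.cases <;> rfl
  simp only [IsSignedPerm, hfst, Fin.cons_injective_iff, Set.mem_range, Function.comp_apply,
    Fin.succAbove_ne, exists_false, not_false_eq_true, true_and,
    Fin.succAbove_right_injective.of_comp_iff]

lemma prepend_injective : Function.Injective (prepend p) := by
  intro g g' h
  funext i
  have hi := congrFun (Fin.cons_right_injective _ h) i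
  simp only [Prod.mk.injEq, Fin.succAbove_right_injective.eq_iff] at hi
  exact Prod.ext hi.1 hi.2

lemma exists_prepend_eq {f : Fin (e + 1) → Fin (e + 1) × Bool} (hf : IsSignedPerm (e + 1) f)
    (h0 : sval (e + 1) f 0 = p + 1) : ∃ g, prepend p g = f := by
  have hf0 : f 0 = (p, true) := by
    simp only [sval, Nat.zero_lt_succ, dite_true, BVal] at h0
    split_ifs at h0 with hb
    · exact Prod.ext (Fin.ext (by simpa using h0)) hb
    · omega
  have hne : ∀ i : Fin e, (f i.succ).1 ≠ p := fun i h =>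
    Fin.succ_ne_zero i (hf (h.trans (congrArg Prod.fst hf0).symm))
  choose z hz using fun i => Fin.exists_succAbove_eq (hne i)
  refine ⟨fun i => (z i, (f i.succ).2), funext fun i => ?_⟩
  cases i using Fin.cases <;> simp [prepend, hz, hf0]

lemma desB_prepend (he : 0 < e) :
    desB (e + 1) (prepend p g) =
      desB e g + if 0 < sval e g 0 ∧ sval e g 0 < p + 1 then 1 else 0 := by
  obtain ⟨c, rfl⟩ : ∃ c, e = c + 1 := ⟨e - 1, by omega⟩
  have hg0 := sval_ne_zero g he
  rw [desB_succ, desB_succ, card_filter, card_filter, sum_range_succ']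
  simp only [sval_prepend_succ, sval_prepend_zero, (shiftAbove_strictMono _).lt_iff_lt,
    shiftAbove_lt_succ_iff]
  split_ifs <;> omega

lemma prepend_mem_BplusSet_iff (he : 0 < e) :
    prepend p g ∈ BplusSet (e + 1) (p + 1) ↔ IsSignedPerm e g ∧ 0 < sval e g (e - 1) := by
  have hlast : e + 1 - 1 = e - 1 + 1 := by omega
  simp only [BplusSet, mem_filter, mem_univ, true_and, isSignedPerm_prepend_iff,
    sval_prepend_zero, hlast, sval_prepend_succ, shiftAbove_pos_iff (Int.natCast_nonneg _)]

lemma BplusPoly_succ (he : 0 < e) :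
    BplusPoly (e + 1) (p + 1) = ∑ j ∈ (Icc (-(e : ℤ)) e).erase 0,
      X ^ (if 0 < j ∧ j < p + 1 then 1 else 0) * BplusPoly e j := by
  set T := ({g | IsSignedPerm e g ∧ 0 < sval e g (e - 1)} : Finset (Fin e → Fin e × Bool))
  have hfiber (j : ℤ) : {g ∈ T | sval e g 0 = j} = BplusSet e j := by
    ext g
    simp only [T, BplusSet, mem_filter, mem_univ, true_and]
    tauto
  calc BplusPoly (e + 1) (p + 1) = ∑ g ∈ T, X ^ desB (e + 1) (prepend p g) := by
        refine (sum_nbij (prepend p) (fun g hg => ?_) (prepend_injective p).injOn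
          (fun f hf => ?_) fun _ _ => rfl).symm
        · simpa [T, prepend_mem_BplusSet_iff p g he] using hg
        · obtain ⟨hperm, h0, -⟩ := by simpa [BplusSet] using hf
          obtain ⟨g, rfl⟩ := exists_prepend_eq p hperm h0
          exact ⟨g, by simpa [T, ← prepend_mem_BplusSet_iff p g he] using hf, rfl⟩
    _ = ∑ j ∈ (Icc (-(e : ℤ)) e).erase 0, ∑ g ∈ T with sval e g 0 = j,
          X ^ desB (e + 1) (prepend p g) :=
        (sum_fiberwise_of_maps_to (fun g _ => sval_mem_erase_Icc g he) _).symm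
    _ = _ := by
        refine sum_congr rfl fun j _ => ?_
        rw [hfiber, BplusPoly, mul_sum]
        refine sum_congr rfl fun g hg => ?_
        obtain ⟨-, rfl, -⟩ := by simpa [BplusSet] using hg
        rw [desB_prepend p g he, pow_add, mul_comm]

end Prepend

/-- for `d ≥ 2` and `1 ≤ s ≤ d`, the recurrence
`B^+_{d,s}(t) = t·∑_{j=1}^{s−1} B^+_{d−1,j}(t) + ∑_{j=s}^{d−1} B^+_{d−1,j}(t)
  + ∑_{j=1}^{d−1} B^+_{d−1,−j}(t)`
holds, with initial conditions `B^+_{1,1}(t) = 1` and `B^+_{1,−1}(t) = 0`. -/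
theorem BplusPoly_recurrence (d : ℕ) (s : ℤ) (hd : 2 ≤ d) (hs : 1 ≤ s) (hsd : s ≤ d) :
    BplusPoly 1 1 = 1 ∧ BplusPoly 1 (-1) = 0 ∧
    BplusPoly d s =
      X * ∑ j ∈ Finset.Icc (1 : ℤ) (s - 1), BplusPoly (d - 1) j
      + ∑ j ∈ Finset.Icc s ((d : ℤ) - 1), BplusPoly (d - 1) j
      + ∑ j ∈ Finset.Icc (1 : ℤ) ((d : ℤ) - 1), BplusPoly (d - 1) (-j) := by
  refine ⟨?_, ?_, ?_⟩
  · rw [BplusPoly, show BplusSet 1 1 = {fun _ => (0, true)} by decide, sum_singleton,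
      show desB 1 (fun _ => (0, true)) = 0 by decide, pow_zero]
  · rw [BplusPoly, show BplusSet 1 (-1) = ∅ by decide, sum_empty]
  · obtain ⟨e, rfl⟩ : ∃ e, d = e + 1 := ⟨d - 1, by omega⟩
    let p : Fin (e + 1) := ⟨(s - 1).toNat, by omega⟩
    have hps : s = p + 1 := by simp only [p]; omega
    rw [hps, BplusPoly_succ p (by omega),
      sum_erase_zero_Icc_eq_add (s := p + 1) _ _ (by omega) (by omega)]
    simp
end

section
/- For d ≥ 2 and 1 ≤ j < d, the j-Eulerian polynomial of type A satisfies A_{d,j}(t) = (1 + t(d−2)) A_{d−1,j}(t) + t(1−t) d/dt A_{d−1,j}(t). -/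
open Polynomial

/-- `σ_{k+1}` of the permutation, as an element of `{1,…,d}` (`0` out of range). -/
def svalA (d : ℕ) (σ : Equiv.Perm (Fin d)) (k : ℕ) : ℕ :=
  if h : k < d then (σ ⟨k, h⟩ : ℕ) + 1 else 0

/-- The type-A descent number `des_A(σ) = |{i ∈ [d−1] : σ_i > σ_{i+1}}|`. -/
def desA (d : ℕ) (σ : Equiv.Perm (Fin d)) : ℕ :=
  ((Finset.range (d - 1)).filter fun i => svalA d σ (i + 1) < svalA d σ i).card

/-- The `j`-Eulerian polynomial of type A:
`A_{d,j}(t) = ∑_{σ ∈ S_d, σ_1 = j} t^{des_A(σ)}`. -/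
noncomputable def APoly (d j : ℕ) : Polynomial ℝ :=
  ∑ σ ∈ Finset.univ.filter (fun σ : Equiv.Perm (Fin d) => svalA d σ 0 = j),
    X ^ desA d σ

/-!
Removing the largest entry `d` from a permutation `σ ∈ S_d` with `σ₁ = j < d` leaves a
permutation `τ ∈ S_{d-1}` with `τ₁ = j`, and conversely `d` can be reinserted into `τ` at any
of the `d - 1` positions after the first. Inserted into a descent of `τ` or at the end it
creates no new descent; inserted into one of the `d - 2 - des τ` ascents it creates one. So
`τ` contributes `(des τ + 1) t^{des τ} + (d - 2 - des τ) t^{des τ + 1}`, which is the operator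
`P ↦ (1 + (d - 2) t) P + t (1 - t) P'` of the right-hand side applied to `t^{des τ}`.
-/
open Finset Equiv

def descentCount (f : ℕ → ℕ) (m : ℕ) : ℕ := #{i ∈ range m | f (i + 1) < f i}

def insertAfter (f : ℕ → ℕ) (p M k : ℕ) : ℕ :=
  if k ≤ p then f k else if k = p + 1 then M else f (k - 1)

section insertAfter

variable (f : ℕ → ℕ) {p M k : ℕ}

lemma insertAfter_of_le (h : k ≤ p) : insertAfter f p M k = f k := if_pos h

@[simp] lemma insertAfter_succ_self : insertAfter f p M (p + 1) = M := by simp [insertAfter]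

lemma insertAfter_of_succ_lt (h : p + 1 < k) : insertAfter f p M k = f (k - 1) := by
  rw [insertAfter, if_neg (by omega), if_neg (by omega)]

lemma descentCount_insertAfter_of_lt (hM : ∀ k, f k < M) {m : ℕ} (hp : p < m) :
    descentCount (insertAfter f p M) (m + 1) =
      if f (p + 1) < f p then descentCount f m else descentCount f m + 1 := by
  obtain ⟨r, rfl⟩ : ∃ r, m = p + 1 + r := ⟨m - p - 1, by omega⟩
  simp only [descentCount, card_filter]
  rw [show p + 1 + r + 1 = p + 2 + r by ring, sum_range_add _ (p + 2), sum_range_add _ (p + 1)]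
  simp only [sum_range_succ]
  have below : ∑ i ∈ range p, (if insertAfter f p M (i + 1) < insertAfter f p M i then 1 else 0)
      = ∑ i ∈ range p, if f (i + 1) < f i then 1 else 0 := by
    refine sum_congr rfl fun i hi => ?_
    have hi := mem_range.1 hi
    rw [insertAfter_of_le f (by omega), insertAfter_of_le f (by omega)]
  have above : ∀ x, (if insertAfter f p M (p + 2 + x + 1) < insertAfter f p M (p + 2 + x)
      then 1 else 0) = if f (p + 1 + x + 1) < f (p + 1 + x) then 1 else 0 := by
    intro x
    rw [insertAfter_of_succ_lt f (by omega), insertAfter_of_succ_lt f (by omega)]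
    rw [show p + 2 + x + 1 - 1 = p + 1 + x + 1 by omega, show p + 2 + x - 1 = p + 1 + x by omega]
  have ascent : insertAfter f p M p < insertAfter f p M (p + 1) := by
    rw [insertAfter_of_le f le_rfl, insertAfter_succ_self]; exact hM p
  have descent : insertAfter f p M (p + 1 + 1) < insertAfter f p M (p + 1) := by
    rw [insertAfter_of_succ_lt f (by omega), insertAfter_succ_self]; exact hM _
  simp only [below, above, if_neg ascent.not_gt, if_pos descent]
  split_ifs <;> omega

lemma descentCount_insertAfter_self (hM : f p < M) :
    descentCount (insertAfter f p M) (p + 1) = descentCount f p := by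
  simp only [descentCount, card_filter]
  rw [sum_range_succ, insertAfter_succ_self, insertAfter_of_le f le_rfl, if_neg hM.not_gt,
    add_zero]
  refine sum_congr rfl fun i hi => ?_
  have hi := mem_range.1 hi
  rw [insertAfter_of_le f (by omega), insertAfter_of_le f (by omega)]

end insertAfter

lemma svalA_of_lt {d k : ℕ} (σ : Perm (Fin d)) (h : k < d) : svalA d σ k = σ ⟨k, h⟩ + 1 :=
  dif_pos h

lemma svalA_lt_succ {d : ℕ} (σ : Perm (Fin d)) (k : ℕ) : svalA d σ k < d + 1 := by
  unfold svalA
  split_ifs <;> omega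

/-- The permutation whose one-line notation is that of `τ` with the new maximum `Fin.last n`
inserted at position `q`. -/
def insertMax {n : ℕ} (τ : Perm (Fin n)) (q : Fin (n + 1)) : Perm (Fin (n + 1)) :=
  (finSuccEquiv' q).trans ((optionCongr τ).trans (finSuccEquiv' (Fin.last n)).symm)

section insertMax

variable {n : ℕ} (τ : Perm (Fin n)) (q : Fin (n + 1))

@[simp] lemma insertMax_apply_self : insertMax τ q q = Fin.last n := by
  simp [insertMax]

@[simp] lemma insertMax_apply_succAbove (i : Fin n) :
    insertMax τ q (q.succAbove i) = (τ i).castSucc := by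
  simp [insertMax]

lemma insertMax_bijective :
    Function.Bijective fun x : Perm (Fin n) × Fin (n + 1) => insertMax x.1 x.2 := by
  refine (Fintype.bijective_iff_injective_and_card _).2 ⟨?_, ?_⟩
  · rintro ⟨τ, q⟩ ⟨τ', q'⟩ h
    dsimp only at h
    obtain rfl : q = q' := (insertMax τ q).injective <| by
      rw [insertMax_apply_self, h, insertMax_apply_self]
    refine Prod.ext (Equiv.ext fun i => Fin.castSucc_injective _ ?_) rfl
    rw [← insertMax_apply_succAbove, ← insertMax_apply_succAbove, h]
  · simp [Fintype.card_perm, Nat.factorial_succ, mul_comm]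

lemma svalA_insertMax_zero : svalA (n + 1) (insertMax τ 0) 0 = n + 1 := by
  rw [svalA_of_lt _ n.succ_pos, Fin.mk_zero, insertMax_apply_self, Fin.val_last]

lemma svalA_insertMax_succ (p : Fin n) :
    svalA (n + 1) (insertMax τ p.succ) = insertAfter (svalA n τ) p (n + 1) := by
  funext k
  rcases lt_or_ge k (p + 1) with hk | hk
  · have hpos : (⟨k, by omega⟩ : Fin (n + 1)) = p.succ.succAbove ⟨k, by omega⟩ := by
      rw [Fin.succAbove_of_castSucc_lt _ _ (by simp [Fin.lt_def]; omega)]; rfl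
    rw [insertAfter_of_le _ (by omega), svalA_of_lt _ (by omega), svalA_of_lt _ (by omega), hpos,
      insertMax_apply_succAbove, Fin.val_castSucc]
  rcases hk.eq_or_lt with rfl | hk
  · rw [insertAfter_succ_self, svalA_of_lt _ (by omega), ← Fin.succ_mk _ _ p.isLt,
      insertMax_apply_self, Fin.val_last]
  rw [insertAfter_of_succ_lt _ hk]
  rcases lt_or_ge k (n + 1) with hkn | hkn
  · have hpos : (⟨k, hkn⟩ : Fin (n + 1)) = p.succ.succAbove ⟨k - 1, by omega⟩ := by
      rw [Fin.succAbove_of_le_castSucc _ _ (by simp [Fin.le_def]; omega)]; ext; simp; omega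
    rw [svalA_of_lt _ hkn, svalA_of_lt _ (by omega), hpos, insertMax_apply_succAbove,
      Fin.val_castSucc]
  · simp [svalA, show ¬ k < n + 1 by omega, show ¬ k - 1 < n by omega]

end insertMax

noncomputable def eulerianStep (R : Type*) [CommRing R] (m : ℕ) : R[X] →ₗ[R] R[X] :=
  LinearMap.mulLeft R (1 + C (m : R) * X) + LinearMap.mulLeft R (X * (1 - X)) ∘ₗ derivative

section eulerianStep

variable {R : Type*} [CommRing R] {m : ℕ}

lemma eulerianStep_apply (P : R[X]) :
    eulerianStep R m P = (1 + C (m : R) * X) * P + X * (1 - X) * derivative P :=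
  rfl

lemma eulerianStep_X_pow {k a : ℕ} (h : k + a = m) :
    eulerianStep R m (X ^ k) = k • X ^ k + a • X ^ (k + 1) + X ^ k := by
  rw [eulerianStep_apply, derivative_X_pow, ← h]
  rcases k with _ | k <;> simp [pow_succ] <;> ring

end eulerianStep

lemma sum_X_pow_desA_insertMax {R : Type*} [CommRing R] {m : ℕ} (τ : Perm (Fin (m + 1))) :
    ∑ p : Fin (m + 1), (X : R[X]) ^ desA (m + 2) (insertMax τ p.succ) =
      eulerianStep R m (X ^ desA (m + 1) τ) := by
  set f := svalA (m + 1) τ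
  have hM : ∀ k, f k < m + 2 := svalA_lt_succ τ
  have hdes (p : Fin (m + 1)) :
      desA (m + 2) (insertMax τ p.succ) = descentCount (insertAfter f p (m + 2)) (m + 1) := by
    rw [desA, svalA_insertMax_succ]; rfl
  simp only [hdes]
  rw [Fin.sum_univ_eq_sum_range
      (fun p => (X : R[X]) ^ descentCount (insertAfter f p (m + 2)) (m + 1)),
    sum_range_succ, descentCount_insertAfter_self f (hM m)]
  rw [sum_congr rfl fun p hp => by
    rw [descentCount_insertAfter_of_lt f hM (mem_range.1 hp), apply_ite (X ^ ·)]]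
  have hcount : descentCount f m + #{i ∈ range m | ¬ f (i + 1) < f i} = m :=
    (card_filter_add_card_filter_not (s := range m) _).trans (card_range m)
  rw [sum_ite, sum_const, sum_const, show desA (m + 1) τ = descentCount f m from rfl,
    eulerianStep_X_pow hcount]
  rfl

theorem APoly_recurrence_general (d j : ℕ) (hd : 2 ≤ d) (hjd : j < d) :
    APoly d j =
      (1 + C ((d : ℝ) - 2) * X) * APoly (d - 1) j
      + X * (1 - X) * derivative (APoly (d - 1) j) := by
  obtain ⟨m, rfl⟩ : ∃ m, d = m + 2 := ⟨d - 2, by omega⟩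
  have hcast : ((m + 2 : ℕ) : ℝ) - 2 = m := by push_cast; ring
  rw [hcast, ← eulerianStep_apply, show m + 2 - 1 = m + 1 from rfl, APoly, APoly, map_sum,
    sum_filter, sum_filter, ← insertMax_bijective.sum_comp, Fintype.sum_prod_type]
  refine sum_congr rfl fun τ _ => ?_
  rw [Fin.sum_univ_succ, svalA_insertMax_zero, if_neg hjd.ne', zero_add]
  simp only [svalA_insertMax_succ, insertAfter_of_le _ (Nat.zero_le _)]
  split_ifs
  · exact sum_X_pow_desA_insertMax τ
  · simp

/-- for `d ≥ 2` and `1 ≤ j < d`,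
`A_{d,j}(t) = (1 + t(d−2)) A_{d−1,j}(t) + t(1−t) (A_{d−1,j})'(t)`. -/
theorem APoly_recurrence (d j : ℕ) (hd : 2 ≤ d) (hj : 1 ≤ j) (hjd : j < d) :
    APoly d j =
      (1 + C ((d : ℝ) - 2) * X) * APoly (d - 1) j
      + X * (1 - X) * derivative (APoly (d - 1) j) :=
  APoly_recurrence_general d j hd hjd
end

section
/- For d ≥ 2 and 1 ≤ j ≤ d−1, the polynomial B^−_{d,j}(t) satisfies B^−_{d,j}(t) = 2(d−2) t B^−_{d−1,j}(t) + 2t(1−t) d/dt B^−_{d−1,j}(t) + t B_{d−1,j}(t). -/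
open Polynomial

/-!
Deleting the letter `±d` from a signed permutation `σ ∈ B_d` with `σ_1 = j` leaves some
`τ ∈ B_{d-1}` with `τ_1 = j`; the letter `±d` cannot stand first, since `1 ≤ j ≤ d - 1`.
If it stands last, it is `-d`, `τ` is arbitrary and `des_B` grows by one: this gives
`t B_{d-1,j}(t)`. Otherwise `τ_{d-1} = σ_d < 0` and `±d` fills one of the `d - 2` interior gaps
of `τ`, with either sign; `des_B` grows by one unless that gap is a descent of `τ`. Since
`τ_1 > 0`, all `m = des_B τ` descents of `τ` are interior gaps, so `τ` contributes
`2 (m t^m + (d - 2 - m) t^(m+1)) = 2 (d - 2) t t^m + 2 t (1 - t) (t^m)'`.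
-/

open Finset

namespace BEulerian

def descentCount (a : ℕ → ℤ) (N : ℕ) : ℕ :=
  ((range N).filter fun i => a i < if i = 0 then 0 else a (i - 1)).card

theorem desB_eq_descentCount (d : ℕ) (f : Fin d → Fin d × Bool) :
    desB d f = descentCount (sval d f) d := rfl

def insertAt (a : ℕ → ℤ) (q : ℕ) (v : ℤ) : ℕ → ℤ :=
  fun k => if k < q then a k else if k = q then v else a (k - 1)

section Descents

variable {a b : ℕ → ℤ} {N q : ℕ} {v : ℤ}

theorem descentCount_succ (a : ℕ → ℤ) (N : ℕ) :
    descentCount a (N + 1) = descentCount a N +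
      if a N < (if N = 0 then 0 else a (N - 1)) then 1 else 0 := by
  simp only [descentCount, card_filter, sum_range_succ]

theorem descentCount_congr (h : ∀ i < N, a i = b i) : descentCount a N = descentCount b N := by
  unfold descentCount
  congr 1
  refine filter_congr fun i hi => ?_
  have hi : i < N := mem_range.mp hi
  rw [h i hi]
  split_ifs <;> simp [h (i - 1) (by omega)]

theorem descentCount_insertAt_self :
    descentCount (insertAt a N v) (N + 1) = descentCount a N +
      if v < (if N = 0 then 0 else a (N - 1)) then 1 else 0 := by
  rw [descentCount_succ,
    descentCount_congr (a := insertAt a N v) (b := a) fun i hi => by simp [insertAt, hi]]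
  by_cases hN : N = 0
  · simp [insertAt, hN]
  · simp [insertAt, hN, show N - 1 < N by omega]

/-- Inserting a letter larger in absolute value than every `a i` creates exactly one descent
next to it, and destroys the descent `a (q - 1) > a q` it separates, if any. -/
theorem descentCount_insertAt_of_lt (hv : ∀ i, |a i| < |v|) (hq : 1 ≤ q) (hqN : q < N) :
    descentCount (insertAt a q v) (N + 1) + (if a q < a (q - 1) then 1 else 0)
      = descentCount a N + 1 := by
  induction N, hqN using Nat.le_induction with
  | base =>
    have hprev := abs_lt.mp (hv (q - 1))
    have hcur := abs_lt.mp (hv q)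
    rw [Nat.succ_eq_add_one, descentCount_succ (insertAt a q v) (q + 1),
      descentCount_succ (insertAt a q v) q, descentCount_succ a q,
      descentCount_congr (a := insertAt a q v) (b := a) fun i hi => by simp [insertAt, hi]]
    simp only [insertAt, lt_irrefl, Nat.add_sub_cancel, show ¬ q + 1 < q by omega,
      show q + 1 ≠ q by omega, show q - 1 < q by omega, show q ≠ 0 by omega,
      show q + 1 ≠ 0 by omega, ↓reduceIte]
    rcases abs_cases v with ⟨hv', -⟩ | ⟨hv', -⟩ <;> split_ifs <;> omega
  | succ N hN ih =>
    rw [descentCount_succ (insertAt a q v), descentCount_succ a]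
    simp only [insertAt, if_neg (show ¬ N + 1 = 0 by omega), if_neg (show ¬ N = 0 by omega),
      Nat.add_sub_cancel, show ¬ N + 1 < q by omega, show N + 1 ≠ q by omega,
      show ¬ N < q by omega, show N ≠ q by omega, ↓reduceIte]
    omega

theorem descentCount_eq_card_filter_Ico (h0 : 0 ≤ a 0) :
    descentCount a N = ((Ico 1 N).filter fun q => a q < a (q - 1)).card := by
  unfold descentCount
  congr 1
  ext k
  rcases Nat.eq_zero_or_pos k with rfl | hk
  · simp only [mem_filter, mem_range, mem_Ico, ↓reduceIte]
    omega
  · simp only [mem_filter, mem_range, mem_Ico, if_neg (show k ≠ 0 by omega)]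
    omega

end Descents

theorem X_mul_derivative_X_pow {R : Type*} [CommSemiring R] (m : ℕ) :
    X * derivative (X ^ m : R[X]) = C (m : R) * X ^ m := by
  rw [derivative_X_pow]
  rcases m with _ | m
  · simp
  · rw [Nat.add_sub_cancel, mul_left_comm, ← pow_succ']

theorem nsmul_X_pow_add_nsmul_X_pow_succ {R : Type*} [CommRing R] (m k : ℕ) :
    (m • X ^ m + k • X ^ (m + 1) : R[X])
      = C ((m + k : ℕ) : R) * X * X ^ m + X * (1 - X) * derivative (X ^ m) := by
  rw [mul_comm X (1 - X), mul_assoc (1 - X), X_mul_derivative_X_pow]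
  simp only [nsmul_eq_mul, Nat.cast_add, map_add, map_natCast, pow_succ]
  ring

theorem sum_Ico_X_pow_descentCount {R : Type*} [CommRing R] {a : ℕ → ℤ} (N : ℕ) (h0 : 0 ≤ a 0) :
    ∑ q ∈ Ico 1 N,
        (if a q < a (q - 1) then X ^ descentCount a N else X ^ (descentCount a N + 1) : R[X])
      = C ((N - 1 : ℕ) : R) * X * X ^ descentCount a N
        + X * (1 - X) * derivative (X ^ descentCount a N) := by
  have hsplit := card_filter_add_card_filter_not (s := Ico 1 N) fun q => a q < a (q - 1)
  rw [Nat.card_Ico, ← descentCount_eq_card_filter_Ico h0] at hsplit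
  rw [sum_ite, sum_const, sum_const, ← descentCount_eq_card_filter_Ico h0, ← hsplit,
    nsmul_X_pow_add_nsmul_X_pow_succ]

def topLetter (N : ℕ) (s : Bool) : ℤ := if s then (N : ℤ) + 1 else -((N : ℤ) + 1)

theorem abs_topLetter (N : ℕ) (s : Bool) : |topLetter N s| = N + 1 := by
  cases s <;> simp only [topLetter, Bool.false_eq_true, ↓reduceIte, abs_neg] <;>
    exact abs_of_pos (by omega)

section Weight

variable {a : ℕ → ℤ} {N q : ℕ} {j v : ℤ}

/-- The weight `t ^ des_B` of a signed permutation of `{1,…,N+1}` with one-line word `b`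
(`b k = σ_{k+1}`) in `B^-_{N+1,j}(t)`, and `0` if it is not counted there. -/
noncomputable def minusWeight (N : ℕ) (j : ℤ) (b : ℕ → ℤ) : ℝ[X] :=
  if b 0 = j ∧ b N < 0 then X ^ descentCount b (N + 1) else 0

theorem minusWeight_insertAt_zero (hv : v ≠ j) : minusWeight N j (insertAt a 0 v) = 0 := by
  simp [minusWeight, insertAt, hv]

theorem minusWeight_insertAt_self_pos (hv : 0 < v) : minusWeight N j (insertAt a N v) = 0 := by
  simp [minusWeight, insertAt, hv.not_gt]

theorem minusWeight_insertAt_self_neg (hN : 1 ≤ N) (ha : ∀ i, |a i| ≤ N) :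
    minusWeight N j (insertAt a N (-((N : ℤ) + 1)))
      = if a 0 = j then X ^ (descentCount a N + 1) else 0 := by
  have hlt : -((N : ℤ) + 1) < a (N - 1) := by have := abs_le.mp (ha (N - 1)); omega
  have hneg : -((N : ℤ) + 1) < 0 := by omega
  simp only [minusWeight, insertAt, descentCount_insertAt_self, lt_irrefl, show 0 < N by omega,
    show N ≠ 0 by omega, ↓reduceIte, hneg, hlt, and_true]

theorem minusWeight_insertAt_of_lt (hv : ∀ i, |a i| < |v|) (hq : 1 ≤ q) (hqN : q < N) :
    minusWeight N j (insertAt a q v) = if a 0 = j ∧ a (N - 1) < 0 then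
      (if a q < a (q - 1) then X ^ descentCount a N else X ^ (descentCount a N + 1)) else 0 := by
  have hdes := descentCount_insertAt_of_lt hv hq hqN
  simp only [minusWeight, insertAt, show 0 < q by omega, show ¬ N < q by omega,
    show N ≠ q by omega, ↓reduceIte]
  split_ifs at hdes ⊢ <;> first | rfl | congr 1 <;> omega

theorem sum_minusWeight_insertAt (hj : 1 ≤ j) (hjN : j ≤ N) (ha : ∀ i, |a i| ≤ N) :
    ∑ q ∈ range (N + 1), ∑ s : Bool, minusWeight N j (insertAt a q (topLetter N s))
      = (if a 0 = j then X ^ (descentCount a N + 1) else 0)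
        + if a 0 = j ∧ a (N - 1) < 0 then
            2 * (C ((N - 1 : ℕ) : ℝ) * X * X ^ descentCount a N
              + X * (1 - X) * derivative (X ^ descentCount a N)) else 0 := by
  have hN : 1 ≤ N := by omega
  have hbig : ∀ s i, |a i| < |topLetter N s| := fun s i => by
    rw [abs_topLetter]
    linarith [ha i]
  have interior : ∀ q ∈ Ico 1 N, ∑ s : Bool, minusWeight N j (insertAt a q (topLetter N s))
        = if a 0 = j ∧ a (N - 1) < 0 then 2 *
            (if a q < a (q - 1) then X ^ descentCount a N else X ^ (descentCount a N + 1))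
          else 0 := by
    intro q hq
    obtain ⟨hq1, hqN⟩ := mem_Ico.mp hq
    simp only [Fintype.sum_bool, minusWeight_insertAt_of_lt (hbig _) hq1 hqN]
    split_ifs <;> ring
  rw [sum_range_succ, range_eq_Ico, sum_eq_sum_Ico_succ_bot (by omega), sum_congr rfl interior]
  simp only [Fintype.sum_bool, topLetter, ↓reduceIte, Bool.false_eq_true,
    minusWeight_insertAt_zero (show (N : ℤ) + 1 ≠ j by omega),
    minusWeight_insertAt_zero (show -((N : ℤ) + 1) ≠ j by omega),
    minusWeight_insertAt_self_pos (show (0 : ℤ) < N + 1 by omega),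
    minusWeight_insertAt_self_neg hN ha]
  by_cases hc : a 0 = j ∧ a (N - 1) < 0
  · simp only [if_pos hc, if_pos hc.1]
    rw [← mul_sum, sum_Ico_X_pow_descentCount N (by omega)]
    ring
  · simp only [if_neg hc, sum_const_zero]
    ring

end Weight

theorem abs_sval_le (d : ℕ) (f : Fin d → Fin d × Bool) (k : ℕ) : |sval d f k| ≤ d := by
  unfold sval BVal
  split_ifs <;> rw [abs_le] <;> omega

def insertMax (n : ℕ) (τ : Fin n → Fin n × Bool) (p : Fin (n + 1)) (s : Bool) :
    Fin (n + 1) → Fin (n + 1) × Bool :=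
  p.insertNth (Fin.last n, s) fun i => ((τ i).1.castSucc, (τ i).2)

section InsertMax

variable {n : ℕ} (τ : Fin n → Fin n × Bool) (p : Fin (n + 1)) (s : Bool)

@[simp]
theorem insertMax_self : insertMax n τ p s p = (Fin.last n, s) := Fin.insertNth_apply_same ..

@[simp]
theorem insertMax_succAbove (i : Fin n) :
    insertMax n τ p s (p.succAbove i) = ((τ i).1.castSucc, (τ i).2) :=
  Fin.insertNth_apply_succAbove ..

theorem sval_insertMax : sval (n + 1) (insertMax n τ p s)
    = insertAt (sval n τ) p (topLetter n s) := by
  funext k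
  have hshift : ∀ i : Fin n, sval (n + 1) (insertMax n τ p s) (p.succAbove i) = sval n τ i := by
    intro i
    rw [sval, dif_pos (p.succAbove i).isLt, sval, dif_pos i.isLt]
    simp [BVal]
  rcases lt_trichotomy k p with hlt | rfl | hgt
  · have := hshift ⟨k, by omega⟩
    rw [Fin.succAbove_of_castSucc_lt _ ⟨k, _⟩ (Fin.lt_def.mpr hlt)] at this
    simpa [insertAt, hlt] using this
  · rw [sval, dif_pos p.isLt]
    simp [BVal, insertAt, topLetter]
  · simp only [insertAt, show ¬ k < p by omega, show k ≠ p by omega, ↓reduceIte]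
    by_cases hkn : k ≤ n
    · have := hshift ⟨k - 1, by omega⟩
      rwa [Fin.succAbove_of_le_castSucc _ ⟨k - 1, _⟩
          (Fin.le_def.mpr (show (p : ℕ) ≤ k - 1 by omega)),
        Fin.succ_mk, Fin.val_mk, Nat.sub_add_cancel (by omega)] at this
    · simp [sval, show ¬ k < n + 1 by omega, show ¬ k - 1 < n by omega]

variable {τ p s}

theorem insertMax_fst_ne_last {x : Fin (n + 1)} (hx : x ≠ p) :
    (insertMax n τ p s x).1 ≠ Fin.last n := by
  obtain ⟨i, rfl⟩ := Fin.exists_succAbove_eq hx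
  rw [insertMax_succAbove]
  exact (Fin.castSucc_lt_last _).ne

theorem isSignedPerm_insertMax (hτ : IsSignedPerm n τ) :
    IsSignedPerm (n + 1) (insertMax n τ p s) := by
  intro a b hab
  simp only at hab
  by_cases ha : a = p <;> by_cases hb : b = p
  · rw [ha, hb]
  · rw [ha, insertMax_self] at hab
    exact absurd hab.symm (insertMax_fst_ne_last hb)
  · rw [hb, insertMax_self] at hab
    exact absurd hab (insertMax_fst_ne_last ha)
  · obtain ⟨i, rfl⟩ := Fin.exists_succAbove_eq ha
    obtain ⟨i', rfl⟩ := Fin.exists_succAbove_eq hb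
    simp only [insertMax_succAbove] at hab
    rw [hτ (Fin.castSucc_injective _ hab)]

theorem insertMax_injective {τ' : Fin n → Fin n × Bool} {p' : Fin (n + 1)} {s' : Bool}
    (h : insertMax n τ p s = insertMax n τ' p' s') : τ = τ' ∧ p = p' ∧ s = s' := by
  obtain rfl : p = p' := by
    by_contra hne
    have := congrArg Prod.fst (congrFun h p)
    rw [insertMax_self] at this
    exact insertMax_fst_ne_last hne this.symm
  have hs := congrFun h p
  simp only [insertMax_self, Prod.mk.injEq, true_and] at hs
  refine ⟨funext fun i => ?_, rfl, hs⟩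
  have hi := congrFun h (p.succAbove i)
  simp only [insertMax_succAbove, Prod.mk.injEq] at hi
  exact Prod.ext (Fin.castSucc_injective _ hi.1) hi.2

theorem exists_insertMax {σ : Fin (n + 1) → Fin (n + 1) × Bool}
    (hσ : IsSignedPerm (n + 1) σ) : ∃ τ p s, IsSignedPerm n τ ∧ σ = insertMax n τ p s := by
  obtain ⟨p, hp⟩ := (Finite.injective_iff_surjective.mp hσ) (Fin.last n)
  have hne : ∀ i, (σ (p.succAbove i)).1 ≠ Fin.last n :=
    fun i he => Fin.succAbove_ne p i (hσ (he.trans hp.symm))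
  refine ⟨fun i => ((σ (p.succAbove i)).1.castPred (hne i), (σ (p.succAbove i)).2), p, (σ p).2,
    fun a b hab => ?_, funext fun x => ?_⟩
  · simp only [Fin.castPred_inj] at hab
    exact Fin.succAbove_right_injective (hσ hab)
  · by_cases hx : x = p
    · subst hx
      simp [← hp]
    · obtain ⟨i, rfl⟩ := Fin.exists_succAbove_eq hx
      simp

theorem sum_isSignedPerm_succ {M : Type*} [AddCommMonoid M]
    (g : (Fin (n + 1) → Fin (n + 1) × Bool) → M) :
    ∑ σ ∈ univ.filter (IsSignedPerm (n + 1)), g σ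
      = ∑ τ ∈ univ.filter (IsSignedPerm n), ∑ p, ∑ s, g (insertMax n τ p s) := by
  simp_rw [← Fintype.sum_prod_type', ← sum_product']
  symm
  refine sum_bij (fun x _ => insertMax n x.1 x.2.1 x.2.2) (fun x hx => ?_) (fun x _ y _ h => ?_)
    (fun σ hσ => ?_) fun _ _ => rfl
  · simp only [mem_product, mem_filter, mem_univ, true_and, and_true] at hx ⊢
    exact isSignedPerm_insertMax hx
  · obtain ⟨h1, h2, h3⟩ := insertMax_injective h
    exact Prod.ext h1 (Prod.ext h2 h3)
  · obtain ⟨τ, p, s, hτ, rfl⟩ := exists_insertMax (mem_filter.mp hσ).2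
    exact ⟨(τ, p, s), by simpa using hτ, rfl⟩

end InsertMax

theorem BminusPoly_succ_eq_sum_insertAt (n : ℕ) (j : ℤ) :
    BminusPoly (n + 1) j = ∑ τ ∈ univ.filter (IsSignedPerm n), ∑ q ∈ range (n + 1), ∑ s : Bool,
      minusWeight n j (insertAt (sval n τ) q (topLetter n s)) := by
  have hweight : ∀ σ, (if sval (n + 1) σ 0 = j ∧ sval (n + 1) σ n < 0 then X ^ desB (n + 1) σ
      else 0) = minusWeight n j (sval (n + 1) σ) := fun σ => by
    rw [desB_eq_descentCount, minusWeight]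
  rw [BminusPoly, BminusSet, ← filter_filter, sum_filter, add_tsub_cancel_right]
  simp only [hweight, sum_isSignedPerm_succ, sval_insertMax]
  exact sum_congr rfl fun τ _ => Fin.sum_univ_eq_sum_range
    (fun q => ∑ s, minusWeight n j (insertAt (sval n τ) q (topLetter n s))) _

end BEulerian

open BEulerian in
theorem BminusPoly_diff_recurrence_general (d : ℕ) (j : ℤ) (hj : 1 ≤ j)
    (hjd : j ≤ (d : ℤ) - 1) :
    BminusPoly d j =
      C (2 * ((d : ℝ) - 2)) * X * BminusPoly (d - 1) j
      + 2 * X * (1 - X) * derivative (BminusPoly (d - 1) j)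
      + X * BPoly (d - 1) j := by
  obtain ⟨n, rfl⟩ : ∃ n, d = n + 1 := ⟨d - 1, by omega⟩
  have hjn : j ≤ n := by push_cast at hjd; omega
  rw [add_tsub_cancel_right]
  have hcoef : 2 * (((n + 1 : ℕ) : ℝ) - 2) = 2 * ((n - 1 : ℕ) : ℝ) := by
    push_cast [Nat.cast_sub (show 1 ≤ n by omega)]
    ring
  calc BminusPoly (n + 1) j
      = X * BPoly n j + ∑ τ ∈ BminusSet n j, 2 * (C ((n - 1 : ℕ) : ℝ) * X * X ^ desB n τ
          + X * (1 - X) * derivative (X ^ desB n τ)) := by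
        rw [BminusPoly_succ_eq_sum_insertAt,
          sum_congr rfl fun τ _ => sum_minusWeight_insertAt hj hjn (abs_sval_le n τ),
          sum_add_distrib, ← sum_filter, ← sum_filter, filter_filter, filter_filter, BPoly, mul_sum]
        simp only [pow_succ', BminusSet, desB_eq_descentCount]
    _ = _ := by
        simp only [hcoef, BminusPoly, derivative_sum, mul_sum,
          ← sum_add_distrib, map_mul, map_ofNat]
        rw [add_comm]
        refine congrArg₂ _ (sum_congr rfl fun τ _ => ?_) rfl
        ring

/-- for `d ≥ 2` and `1 ≤ j ≤ d−1`,
`B^−_{d,j}(t) = 2(d−2) t B^−_{d−1,j}(t) + 2t(1−t) (B^−_{d−1,j})'(t) + t B_{d−1,j}(t)`. -/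
theorem BminusPoly_diff_recurrence (d : ℕ) (j : ℤ) (hd : 2 ≤ d) (hj : 1 ≤ j)
    (hjd : j ≤ (d : ℤ) - 1) :
    BminusPoly d j =
      C (2 * ((d : ℝ) - 2)) * X * BminusPoly (d - 1) j
      + 2 * X * (1 - X) * derivative (BminusPoly (d - 1) j)
      + X * BPoly (d - 1) j :=
  BminusPoly_diff_recurrence_general d j hj hjd
end

section
/- For d ≥ 1 and 1 ≤ j ≤ d, the identity B^+_{d,j}(t) = t^d B^−_{d,−j}(t^{−1}) holds as an identity of rational functions (equivalently, B^+(d,j,r) = B^−(d,−j,d−r) for all r). -/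
/-- `σ ↦ -σ`. -/
def negSigns (d : ℕ) (f : Fin d → Fin d × Bool) : Fin d → Fin d × Bool :=
  fun i => ((f i).1, !(f i).2)

section negSigns

variable {d : ℕ} {f : Fin d → Fin d × Bool}

lemma negSigns_involutive (d : ℕ) : Function.Involutive (negSigns d) := fun f => by
  funext i; simp [negSigns]

lemma isSignedPerm_negSigns_iff : IsSignedPerm d (negSigns d f) ↔ IsSignedPerm d f :=
  Iff.rfl

lemma sval_negSigns (k : ℕ) : sval d (negSigns d f) k = -sval d f k := by
  unfold sval BVal negSigns
  split_ifs <;> simp_all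

lemma BVal_ne_zero (i : Fin d) : BVal d f i ≠ 0 := by
  unfold BVal
  split <;> omega

lemma BVal_injective (hf : IsSignedPerm d f) : Function.Injective (BVal d f) := by
  intro i i' h
  apply hf
  unfold BVal at h
  change (f i).1 = (f i').1
  split at h <;> split at h <;> exact Fin.val_injective (by omega)

/-- With `σ_0 = 0`, consecutive entries `σ_i, σ_{i+1}` of a signed permutation differ, so negation
turns every descent into an ascent and vice versa. -/
lemma sval_ne_prev (hf : IsSignedPerm d f) {i : ℕ} (hi : i < d) :
    sval d f i ≠ if i = 0 then 0 else sval d f (i - 1) := by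
  unfold sval
  rw [dif_pos hi]
  split_ifs with h0 h1
  · exact BVal_ne_zero _
  · intro h
    have := congrArg Fin.val (BVal_injective hf h)
    simp only at this
    omega
  · omega

lemma desB_negSigns (hf : IsSignedPerm d f) : desB d (negSigns d f) = d - desB d f := by
  have descents_compl : ((Finset.range d).filter fun i =>
      sval d (negSigns d f) i < if i = 0 then (0 : ℤ) else sval d (negSigns d f) (i - 1))
      = (Finset.range d).filter fun i =>
        ¬ (sval d f i < if i = 0 then (0 : ℤ) else sval d f (i - 1)) := by
    refine Finset.filter_congr fun i hi => ?_
    have hne := sval_ne_prev hf (Finset.mem_range.mp hi)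
    simp only [sval_negSigns] at hne ⊢
    split_ifs at hne ⊢ <;> omega
  rw [desB, desB, descents_compl, Finset.filter_not,
    Finset.card_sdiff_of_subset (Finset.filter_subset _ _), Finset.card_range]

lemma desB_le (d : ℕ) (f : Fin d → Fin d × Bool) : desB d f ≤ d :=
  (Finset.card_filter_le _ _).trans (Finset.card_range d).le

lemma negSigns_mem_BminusSet_iff (j : ℤ) :
    negSigns d f ∈ BminusSet d (-j) ↔ f ∈ BplusSet d j := by
  simp only [BplusSet, BminusSet, Finset.mem_filter, Finset.mem_univ, true_and,
    isSignedPerm_negSigns_iff, sval_negSigns, neg_inj, Left.neg_neg_iff]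

lemma negSigns_mem_filter_desB_iff (j : ℤ) {r : ℕ} (hr : r ≤ d) :
    negSigns d f ∈ (BminusSet d (-j)).filter (fun f => desB d f = d - r) ↔
      f ∈ (BplusSet d j).filter (fun f => desB d f = r) := by
  simp only [Finset.mem_filter, negSigns_mem_BminusSet_iff]
  refine and_congr_right fun hf => ?_
  rw [desB_negSigns (Finset.mem_filter.mp hf).2.1]
  have := desB_le d f
  omega

end negSigns

theorem Bplus_Bminus_reciprocity_general (d j : ℕ) :
    ∀ r ≤ d,
      ((BplusSet d (j : ℤ)).filter (fun f => desB d f = r)).card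
        = ((BminusSet d (-(j : ℤ))).filter (fun f => desB d f = d - r)).card := by
  intro r hr
  refine Finset.card_nbij' (negSigns d) (negSigns d) (fun f hf => ?_) (fun f hf => ?_)
    (fun f _ => negSigns_involutive d f) (fun f _ => negSigns_involutive d f)
  · exact (negSigns_mem_filter_desB_iff _ hr).mpr hf
  · rw [← negSigns_involutive d f] at hf
    exact (negSigns_mem_filter_desB_iff _ hr).mp hf

/-- for `d ≥ 1` and `1 ≤ j ≤ d`, `B^+_{d,j}(t) = t^d B^−_{d,−j}(t^{−1})`;
equivalently `B^+(d,j,r) = B^−(d,−j,d−r)` for all `r` (with `0 ≤ r ≤ d`). -/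
theorem Bplus_Bminus_reciprocity (d j : ℕ) (hd : 1 ≤ d) (hj : 1 ≤ j) (hjd : j ≤ d) :
    ∀ r ≤ d,
      ((BplusSet d (j : ℤ)).filter (fun f => desB d f = r)).card
        = ((BminusSet d (-(j : ℤ))).filter (fun f => desB d f = d - r)).card :=
  Bplus_Bminus_reciprocity_general d j
end

section
/- For d ≥ 1 and 1 ≤ j ≤ d, the polynomial identity (1+t)^{d−1} A_{d,j}(t) = B^+_{d,j}(t²) + (1/t) B^−_{d,j}(t²) holds, where A_{d,j}(t) is the type-A j-Eulerian polynomial. -/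
open Polynomial

/-!
Deleting the first letter `σ_1 = j` and standardizing the rest gives a recursion in `d` for both
sides. For type A it reads `A_{d+1,j} = ∑_{m=1}^{d} t^{[m<j]} A_{d,m}`. For type B write the
right-hand side as `T_{d,j} = ∑_{σ_1 = j} t^{2 des_B σ - [σ_d < 0]}`; the exponent is a sum of local
weights over adjacent letters, so deletion gives `T_{d+1,j} = ∑_{0<|m|≤d} t^{2[0<m<j]} T_{d,m}`,
and complementing every letter (`σ_i ↦ σ_i ∓ (d+1)`) shows `T_{d,-m} = t T_{d,d+1-m}`. Hence
`T_{d+1,j} = ∑_{m=1}^{d} (t^{2[m<j]} + t) T_{d,m} = (1+t) ∑_{m=1}^{d} t^{[m<j]} T_{d,m}`,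
which is `(1+t)` times the type-A recursion.
-/

open Finset Equiv

namespace JEulerian

def signWeight (x y : ℤ) : ℕ := if (0 < x ↔ 0 < y) then (if y < x then 2 else 0) else 1

/-- `2 des_B − [s n < 0]` of the word `s 0, …, s n` (`two_mul_card_descents`), as a sum of local
terms: a descent between letters of equal sign counts twice, a sign change once. -/
def tStat (n : ℕ) (s : ℕ → ℤ) : ℕ :=
  (if s 0 < 0 then 1 else 0) + ∑ i ∈ range n, signWeight (s i) (s (i + 1))

lemma tStat_succ (n : ℕ) (s : ℕ → ℤ) :
    tStat (n + 1) s = tStat n s + signWeight (s n) (s (n + 1)) := by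
  simp only [tStat, sum_range_succ, add_assoc]

lemma signWeight_add_of_ne_zero {x y : ℤ} (hx : x ≠ 0) (hy : y ≠ 0) :
    signWeight x y + (if y < 0 then 1 else 0)
      = (if y < x then 2 else 0) + if x < 0 then 1 else 0 := by
  unfold signWeight; split_ifs <;> omega

lemma signWeight_comp_of_strictMono {φ : ℤ → ℤ} (hφ : StrictMono φ) (h0 : φ 0 = 0) (x y : ℤ) :
    signWeight (φ x) (φ y) = signWeight x y := by
  have hpos (z : ℤ) : 0 < φ z ↔ 0 < z := by
    simpa [h0] using hφ.lt_iff_lt (a := 0) (b := z)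
  simp only [signWeight, hpos, hφ.lt_iff_lt]

lemma two_mul_card_descents (s : ℕ → ℤ) (n : ℕ) (hs : ∀ i ≤ n, s i ≠ 0) :
    2 * #{i ∈ range (n + 1) | s i < if i = 0 then 0 else s (i - 1)}
      = tStat n s + if s n < 0 then 1 else 0 := by
  induction n with
  | zero =>
    rw [zero_add, card_filter, sum_range_one]
    simp only [↓reduceIte, tStat, sum_range_zero]
    split_ifs <;> rfl
  | succ n ih =>
    have hw := signWeight_add_of_ne_zero (hs n (by omega)) (hs (n + 1) le_rfl)
    rw [card_filter, sum_range_succ, ← card_filter, mul_add, ih fun i hi => hs i (by omega),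
      tStat_succ, if_neg n.succ_ne_zero, Nat.add_sub_cancel]
    split_ifs at hw ⊢ <;> omega

def signedVal {m : ℕ} (x : Fin m × Bool) : ℤ := if x.2 then (x.1 : ℤ) + 1 else -((x.1 : ℤ) + 1)

lemma sval_of_lt {d k : ℕ} (f : Fin d → Fin d × Bool) (h : k < d) :
    sval d f k = signedVal (f ⟨k, h⟩) := dif_pos h

lemma signedVal_ne_zero {m : ℕ} (x : Fin m × Bool) : signedVal x ≠ 0 := by
  unfold signedVal; split_ifs <;> omega

lemma abs_signedVal_le {m : ℕ} (x : Fin m × Bool) : |signedVal x| ≤ m := by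
  have := x.1.isLt
  unfold signedVal; split_ifs <;> rw [abs_le] <;> constructor <;> omega

lemma signedVal_injective {m : ℕ} : Function.Injective (signedVal (m := m)) := by
  rintro ⟨a, _ | _⟩ ⟨b, _ | _⟩ h <;> dsimp only [signedVal] at h <;>
    simp only [Bool.false_eq_true, ↓reduceIte] at h <;>
    first | omega | (congr 1; ext; omega)

lemma sval_ne_zero {d k : ℕ} (f : Fin d → Fin d × Bool) (h : k < d) : sval d f k ≠ 0 := by
  rw [sval_of_lt f h]; exact signedVal_ne_zero _

lemma two_mul_desB {n : ℕ} (f : Fin (n + 1) → Fin (n + 1) × Bool) :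
    2 * desB (n + 1) f = tStat n (sval (n + 1) f) + if sval (n + 1) f n < 0 then 1 else 0 :=
  two_mul_card_descents _ n fun _ hi => sval_ne_zero f (by omega)

lemma val_succAbove {n : ℕ} (p : Fin (n + 1)) (i : Fin n) :
    (p.succAbove i : ℕ) = if (i : ℕ) < p then (i : ℕ) else (i : ℕ) + 1 := by
  split_ifs with h
  · rw [Fin.succAbove_of_castSucc_lt _ _ h, Fin.val_castSucc]
  · rw [Fin.succAbove_of_le_castSucc _ _ (not_lt.mp h), Fin.val_succ]

def signedSuccAboveVal (p : ℕ) (x : ℤ) : ℤ :=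
  if x ≤ -((p : ℤ) + 1) then x - 1 else if x ≤ p then x else x + 1

lemma strictMono_signedSuccAboveVal (p : ℕ) : StrictMono (signedSuccAboveVal p) := by
  intro x y h; unfold signedSuccAboveVal; split_ifs <;> omega

lemma signedSuccAboveVal_zero (p : ℕ) : signedSuccAboveVal p 0 = 0 := by
  unfold signedSuccAboveVal; split_ifs <;> omega

lemma signedVal_succAbove {n : ℕ} (p : Fin (n + 2)) (x : Fin (n + 1) × Bool) :
    signedVal (p.succAbove x.1, x.2) = signedSuccAboveVal p (signedVal x) := by
  unfold signedVal signedSuccAboveVal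
  rw [val_succAbove]
  split_ifs <;> push_cast at * <;> omega

def consB {n : ℕ} (p : Fin (n + 2)) (g : Fin (n + 1) → Fin (n + 1) × Bool) :
    Fin (n + 2) → Fin (n + 2) × Bool :=
  Fin.cons (p, true) fun k => (p.succAbove (g k).1, (g k).2)

lemma sval_consB_zero {n : ℕ} (p : Fin (n + 2)) (g : Fin (n + 1) → Fin (n + 1) × Bool) :
    sval (n + 2) (consB p g) 0 = p + 1 := by
  rw [sval_of_lt _ (by omega)]; rfl

lemma sval_consB_succ {n : ℕ} (p : Fin (n + 2)) (g : Fin (n + 1) → Fin (n + 1) × Bool)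
    (k : ℕ) : sval (n + 2) (consB p g) (k + 1) = signedSuccAboveVal p (sval (n + 1) g k) := by
  by_cases hk : k < n + 1
  · rw [sval_of_lt _ hk, sval_of_lt _ (by omega), ← signedVal_succAbove]; rfl
  · rw [sval, sval, dif_neg (by omega), dif_neg hk, signedSuccAboveVal_zero]

lemma signWeight_signedSuccAboveVal {n : ℕ} (p : Fin (n + 2)) (y : Fin (n + 1) × Bool) :
    signWeight (p + 1) (signedSuccAboveVal p (signedVal y))
      = (if signedVal y < 0 then 1 else 0) + if y.2 ∧ (y.1 : ℕ) < p then 2 else 0 := by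
  obtain ⟨a, _ | _⟩ := y <;>
    simp only [signWeight, signedSuccAboveVal, signedVal, Bool.false_eq_true, true_and,
      false_and, ↓reduceIte] <;> split_ifs <;> omega

lemma tStat_consB {n : ℕ} (p : Fin (n + 2)) (g : Fin (n + 1) → Fin (n + 1) × Bool) :
    tStat (n + 1) (sval (n + 2) (consB p g))
      = tStat n (sval (n + 1) g) + if (g 0).2 ∧ ((g 0).1 : ℕ) < p then 2 else 0 := by
  have hmono := strictMono_signedSuccAboveVal p
  simp only [tStat, sum_range_succ', sval_consB_succ, sval_consB_zero,
    signWeight_comp_of_strictMono hmono (signedSuccAboveVal_zero p)]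
  rw [sval_of_lt g (by omega), Fin.zero_eta, signWeight_signedSuccAboveVal]
  have : ¬ ((p : ℤ) + 1 < 0) := by omega
  simp only [this, ↓reduceIte]
  ring

lemma isSignedPerm_consB {n : ℕ} (p : Fin (n + 2)) {g : Fin (n + 1) → Fin (n + 1) × Bool}
    (hg : IsSignedPerm (n + 1) g) : IsSignedPerm (n + 2) (consB p g) := by
  have : (fun i => (consB p g i).1) = Fin.cons p fun k => p.succAbove (g k).1 := by
    funext i; cases i using Fin.cases <;> rfl
  rw [IsSignedPerm, this, Fin.cons_injective_iff]
  exact ⟨fun ⟨k, hk⟩ => Fin.succAbove_ne p _ hk, (Fin.succAbove_right_injective).comp hg⟩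

lemma sum_consB {M : Type*} [AddCommMonoid M] {n : ℕ} (p : Fin (n + 2))
    (F : (Fin (n + 2) → Fin (n + 2) × Bool) → M) :
    ∑ f ∈ univ.filter (fun f => IsSignedPerm (n + 2) f ∧ f 0 = (p, true)), F f
      = ∑ g ∈ univ.filter (IsSignedPerm (n + 1)), F (consB p g) := by
  symm
  refine sum_nbij (consB p) (fun g hg => ?_) (fun g _ g' _ h => ?_) (fun f hf => ?_)
    (fun _ _ => rfl)
  · simp only [mem_filter, mem_univ, true_and] at hg ⊢
    exact ⟨isSignedPerm_consB p hg, rfl⟩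
  · funext k
    have := congrFun h k.succ
    simp only [consB, Fin.cons_succ, Prod.mk.injEq] at this
    exact Prod.ext (Fin.succAbove_right_injective this.1) this.2
  · simp only [mem_coe, mem_filter, mem_univ, true_and] at hf
    obtain ⟨hf, h0⟩ := hf
    have hne (k : Fin (n + 1)) : (f k.succ).1 ≠ p := fun h =>
      Fin.succ_ne_zero k (hf (h.trans (congrArg Prod.fst h0).symm))
    choose z hz using fun k => Fin.exists_succAbove_eq (hne k)
    refine ⟨fun k => (z k, (f k.succ).2), ?_, ?_⟩
    · simp only [mem_coe, mem_filter, mem_univ, true_and]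
      intro k k' h
      exact Fin.succ_injective _
        (hf (show (f k.succ).1 = (f k'.succ).1 by rw [← hz, ← hz]; exact congrArg _ h))
    · funext i
      cases i using Fin.cases with
      | zero => exact h0.symm
      | succ k => simp only [consB, Fin.cons_succ, hz]

noncomputable def Tpoly (n : ℕ) (y : Fin (n + 1) × Bool) : ℝ[X] :=
  ∑ f ∈ univ.filter (fun f => IsSignedPerm (n + 1) f ∧ f 0 = y), X ^ tStat n (sval (n + 1) f)

lemma Tpoly_succ (n : ℕ) (p : Fin (n + 2)) :
    Tpoly (n + 1) (p, true)
      = ∑ y, X ^ (if y.2 ∧ (y.1 : ℕ) < p then 2 else 0) * Tpoly n y := by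
  rw [Tpoly, sum_consB, ← sum_fiberwise _ (fun g => g 0)]
  refine sum_congr rfl fun y _ => ?_
  rw [Tpoly, mul_sum, filter_filter]
  refine sum_congr rfl fun g hg => ?_
  rw [tStat_consB, pow_add, (mem_filter.mp hg).2.2, mul_comm]

def complement {d : ℕ} (f : Fin d → Fin d × Bool) : Fin d → Fin d × Bool :=
  fun i => ((f i).1.rev, !(f i).2)

lemma complement_complement {d : ℕ} (f : Fin d → Fin d × Bool) :
    complement (complement f) = f := by
  funext i; simp [complement]

lemma isSignedPerm_complement {d : ℕ} {f : Fin d → Fin d × Bool} (hf : IsSignedPerm d f) :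
    IsSignedPerm d (complement f) :=
  fun _ _ h => hf (Fin.rev_injective h)

def complVal (d : ℕ) (x : ℤ) : ℤ := if 0 < x then x - (d + 1) else x + (d + 1)

lemma signedVal_rev {d : ℕ} (x : Fin d × Bool) :
    signedVal (x.1.rev, !x.2) = complVal d (signedVal x) := by
  obtain ⟨a, _ | _⟩ := x <;>
  · have := a.isLt
    simp only [signedVal, complVal, Fin.val_rev, Bool.not_false, Bool.not_true,
      Bool.false_eq_true, ↓reduceIte]
    push_cast [Nat.cast_sub (show (a : ℕ) + 1 ≤ d by omega)]
    split_ifs <;> omega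

lemma sval_complement {d k : ℕ} (f : Fin d → Fin d × Bool) (h : k < d) :
    sval d (complement f) k = complVal d (sval d f k) := by
  rw [sval_of_lt _ h, sval_of_lt _ h, ← signedVal_rev]; rfl

lemma signWeight_complVal {d : ℕ} {x y : ℤ} (hx : |x| ≤ d) (hy : |y| ≤ d) :
    signWeight (complVal d x) (complVal d y) = signWeight x y := by
  rw [abs_le] at hx hy
  unfold signWeight complVal
  split_ifs <;> omega

lemma tStat_complement {n : ℕ} (f : Fin (n + 1) → Fin (n + 1) × Bool) (h : (f 0).2 = false) :
    tStat n (sval (n + 1) (complement f)) + 1 = tStat n (sval (n + 1) f) := by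
  have hval {k : ℕ} (hk : k < n + 1) : |sval (n + 1) f k| ≤ ↑(n + 1) := by
    rw [sval_of_lt f hk]; exact abs_signedVal_le _
  have hsum : ∑ i ∈ range n, signWeight (sval (n + 1) (complement f) i)
      (sval (n + 1) (complement f) (i + 1))
      = ∑ i ∈ range n, signWeight (sval (n + 1) f i) (sval (n + 1) f (i + 1)) := by
    refine sum_congr rfl fun i hi => ?_
    have hi : i < n := mem_range.mp hi
    rw [sval_complement f (by omega), sval_complement f (by omega)]
    exact signWeight_complVal (hval (by omega)) (hval (by omega))
  have hneg : sval (n + 1) f 0 < 0 := by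
    rw [sval_of_lt f (by omega), Fin.zero_eta, signedVal, h]
    simp only [Bool.false_eq_true, ↓reduceIte]
    omega
  have hpos : ¬ complVal (n + 1) (sval (n + 1) f 0) < 0 := by
    have := abs_le.mp (hval (k := 0) (by omega))
    unfold complVal; split_ifs <;> omega
  rw [tStat, tStat, hsum, sval_complement f (by omega), if_neg hpos, if_pos hneg]
  ring

lemma Tpoly_false (n : ℕ) (q : Fin (n + 1)) : Tpoly n (q, false) = X * Tpoly n (q.rev, true) := by
  rw [Tpoly, Tpoly, mul_sum]
  refine sum_nbij' complement complement (fun f hf => ?_) (fun f hf => ?_)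
    (fun f _ => complement_complement f) (fun f _ => complement_complement f) (fun f hf => ?_)
  · simp only [mem_filter, mem_univ, true_and] at hf ⊢
    exact ⟨isSignedPerm_complement hf.1, by simp [complement, hf.2]⟩
  · simp only [mem_filter, mem_univ, true_and] at hf ⊢
    exact ⟨isSignedPerm_complement hf.1, by simp [complement, hf.2]⟩
  · rw [← pow_succ', tStat_complement f (by simp [(mem_filter.mp hf).2.2])]

def succAboveVal (p x : ℕ) : ℕ := if x ≤ p then x else x + 1

lemma strictMono_succAboveVal (p : ℕ) : StrictMono (succAboveVal p) := by
  intro x y h; unfold succAboveVal; split_ifs <;> omega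

/-- The permutation `p, p.succAbove (e 0), p.succAbove (e 1), …`, built from `cycleRange` so that
`decomposeFin` inverts it. -/
def consA {n : ℕ} (p : Fin (n + 2)) (e : Perm (Fin (n + 1))) : Perm (Fin (n + 2)) :=
  p.cycleRange⁻¹ * Perm.decomposeFin.symm (0, e)

lemma consA_apply_zero {n : ℕ} (p : Fin (n + 2)) (e : Perm (Fin (n + 1))) :
    consA p e 0 = p := by
  simp [consA, Perm.mul_apply, Perm.inv_def]

lemma consA_apply_succ {n : ℕ} (p : Fin (n + 2)) (e : Perm (Fin (n + 1))) (k : Fin (n + 1)) :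
    consA p e k.succ = p.succAbove (e k) := by
  simp [consA, Perm.mul_apply, Perm.inv_def]

lemma svalA_of_lt {d k : ℕ} (σ : Perm (Fin d)) (h : k < d) : svalA d σ k = σ ⟨k, h⟩ + 1 :=
  dif_pos h

lemma svalA_consA_zero {n : ℕ} (p : Fin (n + 2)) (e : Perm (Fin (n + 1))) :
    svalA (n + 2) (consA p e) 0 = p + 1 := by
  rw [svalA_of_lt _ (by omega), Fin.zero_eta, consA_apply_zero]

lemma svalA_consA_succ {n : ℕ} (p : Fin (n + 2)) (e : Perm (Fin (n + 1))) (k : ℕ) :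
    svalA (n + 2) (consA p e) (k + 1) = succAboveVal p (svalA (n + 1) e k) := by
  by_cases hk : k < n + 1
  · rw [svalA_of_lt _ hk, svalA_of_lt _ (by omega), show (⟨k + 1, _⟩ : Fin (n + 2))
      = Fin.succ ⟨k, hk⟩ from rfl, consA_apply_succ, val_succAbove]
    unfold succAboveVal; split_ifs <;> omega
  · rw [svalA, svalA, dif_neg (by omega), dif_neg hk]; rfl

lemma desA_consA {n : ℕ} (p : Fin (n + 2)) (e : Perm (Fin (n + 1))) :
    desA (n + 2) (consA p e) = desA (n + 1) e + if svalA (n + 1) e 0 ≤ p then 1 else 0 := by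
  rw [desA, desA, card_filter, card_filter, Nat.add_sub_cancel, show n + 2 - 1 = n + 1 from rfl,
    sum_range_succ']
  simp only [svalA_consA_succ, svalA_consA_zero, (strictMono_succAboveVal p).lt_iff_lt]
  congr 1
  unfold succAboveVal; split_ifs <;> omega

lemma sum_consA {M : Type*} [AddCommMonoid M] {n : ℕ} (p : Fin (n + 2))
    (F : Perm (Fin (n + 2)) → M) :
    ∑ π ∈ univ.filter (fun π : Perm (Fin (n + 2)) => π 0 = p), F π = ∑ e, F (consA p e) := by
  symm
  refine sum_nbij' (consA p) (fun π => (Perm.decomposeFin (p.cycleRange * π)).2)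
    (fun e _ => by simp [consA_apply_zero]) (fun _ _ => mem_univ _) (fun e _ => ?_)
    (fun π hπ => ?_) (fun _ _ => rfl)
  · simp [consA]
  · have hzero : (Perm.decomposeFin (p.cycleRange * π)).1 = 0 := by
      have := Perm.decomposeFin_symm_apply_zero (Perm.decomposeFin (p.cycleRange * π)).1
        (Perm.decomposeFin (p.cycleRange * π)).2
      rw [Prod.mk.eta, symm_apply_apply, Perm.mul_apply, (mem_filter.mp hπ).2,
        Fin.cycleRange_self] at this
      exact this.symm
    rw [consA, ← hzero, Prod.mk.eta, symm_apply_apply, inv_mul_cancel_left]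

lemma svalA_zero_eq_iff {n : ℕ} (σ : Perm (Fin (n + 1))) (q : Fin (n + 1)) :
    svalA (n + 1) σ 0 = q + 1 ↔ σ 0 = q := by
  rw [svalA_of_lt σ (by omega), Fin.zero_eta, Nat.add_right_cancel_iff, Fin.val_inj]

lemma APoly_succ (n : ℕ) (p : Fin (n + 2)) :
    APoly (n + 2) (p + 1)
      = ∑ q : Fin (n + 1), X ^ (if (q : ℕ) < p then 1 else 0) * APoly (n + 1) (q + 1) := by
  rw [APoly, filter_congr fun π _ => svalA_zero_eq_iff π p, sum_consA,
    ← sum_fiberwise univ (fun e => e 0)]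
  refine sum_congr rfl fun q _ => ?_
  rw [APoly, mul_sum, filter_congr fun e _ => svalA_zero_eq_iff e q]
  refine sum_congr rfl fun e he => ?_
  rw [desA_consA, pow_add, mul_comm, (svalA_zero_eq_iff e q).mpr (mem_filter.mp he).2]
  simp only [Nat.add_one_le_iff]

lemma sval_zero_eq_iff {n : ℕ} (f : Fin (n + 1) → Fin (n + 1) × Bool) (q : Fin (n + 1)) :
    sval (n + 1) f 0 = (q : ℤ) + 1 ↔ f 0 = (q, true) := by
  rw [sval_of_lt f (by omega), Fin.zero_eta, show (q : ℤ) + 1 = signedVal (q, true) from rfl,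
    signedVal_injective.eq_iff]

lemma Tpoly_eq_sum_desB (n : ℕ) (q : Fin (n + 1)) :
    Tpoly n (q, true) = ∑ f ∈ BplusSet (n + 1) (q + 1), X ^ (2 * desB (n + 1) f)
      + ∑ f ∈ BminusSet (n + 1) (q + 1), X ^ (2 * desB (n + 1) f - 1) := by
  rw [Tpoly, ← sum_filter_add_sum_filter_not _ (fun f => 0 < sval (n + 1) f n)]
  have hlast (f : Fin (n + 1) → Fin (n + 1) × Bool) :
      ¬ 0 < sval (n + 1) f n ↔ sval (n + 1) f n < 0 := by
    have := sval_ne_zero f (Nat.lt_succ_self n); omega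
  congr 1
  · refine sum_congr ?_ fun f hf => ?_
    · ext f
      simp [BplusSet, sval_zero_eq_iff, and_assoc]
    · have := two_mul_desB f
      rw [if_neg (by simp [BplusSet] at hf; omega)] at this
      rw [this, add_zero]
  · refine sum_congr ?_ fun f hf => ?_
    · ext f
      simp [BminusSet, sval_zero_eq_iff, and_assoc, hlast]
    · have := two_mul_desB f
      rw [if_pos (by simp [BminusSet] at hf; exact hf.2.2)] at this
      rw [this, Nat.add_sub_cancel]

lemma one_add_X_pow_mul_APoly (n : ℕ) (p : Fin (n + 1)) :
    (1 + X) ^ n * APoly (n + 1) (p + 1) = Tpoly n (p, true) := by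
  induction n with
  | zero =>
    obtain rfl := Fin.fin_one_eq_zero p
    have hA : APoly 1 1 = 1 := by
      simp [APoly, desA, svalA]
    have hset : univ.filter (fun f : Fin 1 → Fin 1 × Bool => IsSignedPerm 1 f ∧ f 0 = (0, true))
        = {fun _ => (0, true)} := by decide
    have hT : Tpoly 0 (0, true) = 1 := by
      rw [Tpoly, hset, sum_singleton,
        show tStat 0 (sval 1 fun _ => ((0 : Fin 1), true)) = 0 by decide, pow_zero]
    simp [hA, hT]
  | succ n ih =>
    calc (1 + X) ^ (n + 1) * APoly (n + 2) (p + 1)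
        = ∑ q : Fin (n + 1), (1 + X) * X ^ (if (q : ℕ) < p then 1 else 0)
            * ((1 + X) ^ n * APoly (n + 1) (q + 1)) := by
          rw [APoly_succ, mul_sum]
          exact sum_congr rfl fun _ _ => by ring
      _ = ∑ q : Fin (n + 1), (X ^ (if (q : ℕ) < p then 2 else 0) * Tpoly n (q, true)
            + X * Tpoly n (q, true)) := by
          refine sum_congr rfl fun q _ => ?_
          rw [ih]
          split_ifs <;> ring
      _ = ∑ q : Fin (n + 1), (X ^ (if (q : ℕ) < p then 2 else 0) * Tpoly n (q, true)
            + Tpoly n (q, false)) := by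
          rw [sum_add_distrib, sum_add_distrib]
          simp_rw [Tpoly_false]
          exact congrArg _ (Fintype.sum_equiv Fin.revPerm _ _ fun _ => rfl).symm
      _ = Tpoly (n + 1) (p, true) := by
          rw [Tpoly_succ, Fintype.sum_prod_type]
          refine sum_congr rfl fun q _ => ?_
          rw [Fintype.sum_bool]
          simp

end JEulerian

theorem APoly_eq_Tpoly_general (d j : ℕ) (hj : 1 ≤ j) (hjd : j ≤ d) :
    (1 + X) ^ (d - 1) * APoly d j =
      ∑ f ∈ BplusSet d (j : ℤ), X ^ (2 * desB d f)
        + ∑ f ∈ BminusSet d (j : ℤ), X ^ (2 * desB d f - 1) := by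
  obtain ⟨n, rfl⟩ : ∃ n, d = n + 1 := ⟨d - 1, by omega⟩
  obtain ⟨q, rfl⟩ : ∃ q, j = q + 1 := ⟨j - 1, by omega⟩
  have := JEulerian.one_add_X_pow_mul_APoly n ⟨q, by omega⟩
  rw [JEulerian.Tpoly_eq_sum_desB] at this
  simpa using this

/-- for `d ≥ 1` and `1 ≤ j ≤ d`, the polynomial identity
`(1+t)^{d−1} A_{d,j}(t) = B^+_{d,j}(t²) + (1/t) B^−_{d,j}(t²)` holds (the right-hand
side is a polynomial since `des_B ≥ 1` on `B^−_{d,j}`). -/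
theorem APoly_eq_Tpoly (d j : ℕ) (hd : 1 ≤ d) (hj : 1 ≤ j) (hjd : j ≤ d) :
    (1 + X) ^ (d - 1) * APoly d j =
      ∑ f ∈ BplusSet d (j : ℤ), X ^ (2 * desB d f)
        + ∑ f ∈ BminusSet d (j : ℤ), X ^ (2 * desB d f - 1) :=
  APoly_eq_Tpoly_general d j hj hjd
end

section
/- Let h(t) = Σ_{i=0}^{d} h_i t^i be a polynomial with non-negative real coefficients, h_0 = 1, and reciprocal coefficients h_i = h_{d−i} for all i, and suppose h has only real roots. Then (−1)^{⌊d/2⌋} h(−1) ≥ 0. -/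
/-!
Non-negative coefficients with `h₀ = 1` make every root of `h` negative, and reciprocity makes
the root multiset invariant under `r ↦ r⁻¹`. If `-1` is not a root, inversion exchanges the
roots in `(-1, 0)` with those in `(-∞, -1)`, so exactly `d / 2` roots lie in `(-1, 0)`; these
are precisely the negative factors of `h(-1) = ∏ (-1 - r)`.
-/

open Polynomial

namespace Multiset

theorem zero_le_neg_one_pow_card_filter_neg_mul_prod {R : Type*} [CommRing R] [LinearOrder R]
    [IsStrictOrderedRing R] (s : Multiset R) :
    0 ≤ (-1) ^ card (s.filter (· < 0)) * s.prod := by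
  induction s using Multiset.induction_on with
  | empty => simp
  | cons a s ih =>
    rw [filter_cons, prod_cons, card_add]
    split_ifs with ha
    · calc (0 : R) ≤ -a * ((-1) ^ card (s.filter (· < 0)) * s.prod) :=
            mul_nonneg (neg_nonneg.mpr ha.le) ih
        _ = _ := by simp only [card_singleton]; ring
    · calc (0 : R) ≤ a * ((-1) ^ card (s.filter (· < 0)) * s.prod) :=
            mul_nonneg (not_lt.mp ha) ih
        _ = _ := by simp only [card_zero, zero_add]; ring

theorem card_filter_neg_one_lt_eq_card_div_two {K : Type*} [Field K] [LinearOrder K]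
    [IsStrictOrderedRing K] {s : Multiset K} (hneg : ∀ r ∈ s, r < 0) (hinv : s.map (·⁻¹) = s)
    (hs : -1 ∉ s) : card (s.filter (-1 < ·)) = card s / 2 := by
  have hswap : s.filter (· < -1) = (s.filter (-1 < ·)).map (·⁻¹) := by
    conv_lhs => rw [← hinv]
    rw [filter_map]
    congr 1
    refine filter_congr fun r hr => ?_
    simpa using inv_lt_of_neg (hneg r hr) (neg_one_lt_zero (R := K))
  have hcompl : s.filter (fun r => ¬r < -1) = s.filter (-1 < ·) :=
    filter_congr fun r hr => by
      rw [not_lt, le_iff_lt_or_eq, or_iff_left (ne_of_mem_of_not_mem hr hs).symm]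
  have hcard := congrArg card (filter_add_not (· < -1) s)
  rw [card_add, hcompl, hswap, card_map] at hcard
  omega

end Multiset

namespace Polynomial

section Reverse

variable {K : Type*} [Field K]

theorem reverse_X_sub_C (r : K) : reverse (X - C r) = 1 - C r * X := by
  rw [sub_eq_add_neg, ← C_neg, reverse_add_C, ← one_mul X, reverse_mul_X, ← C_1, reverse_C]
  simp only [map_one, map_neg, one_mul, natDegree_X, pow_one, neg_mul]
  ring

theorem reverse_multiset_prod_X_sub_C (s : Multiset K) (hs : ∀ r ∈ s, r ≠ 0) :
    reverse (s.map (X - C ·)).prod =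
      C (s.map (-·)).prod * ((s.map (·⁻¹)).map (X - C ·)).prod := by
  induction s using Multiset.induction_on with
  | empty => simp [← C_1, -map_one]
  | cons a s ih =>
    have ha : a ≠ 0 := hs a (Multiset.mem_cons_self a s)
    have hfactor : (1 - C a * X : K[X]) = C (-a) * (X - C a⁻¹) := by
      rw [mul_sub, ← C_mul, neg_mul, mul_inv_cancel₀ ha]
      simp only [map_neg, neg_mul, map_one, sub_neg_eq_add]
      ring
    simp only [Multiset.map_cons, Multiset.prod_cons, reverse_mul_of_domain, C_mul,
      ih fun r hr => hs r (Multiset.mem_cons_of_mem hr), reverse_X_sub_C, hfactor]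
    ring

theorem roots_reverse_of_splits {f : K[X]} (hf : f.Splits) (h0 : f.coeff 0 ≠ 0) :
    f.reverse.roots = f.roots.map (·⁻¹) := by
  have hroots : ∀ r ∈ f.roots, r ≠ 0 := by
    rintro r hr rfl
    exact h0 (coeff_zero_eq_eval_zero f ▸ (mem_roots'.mp hr).2)
  have hlc : f.leadingCoeff ≠ 0 := fun hl => h0 (by simp [leadingCoeff_eq_zero.mp hl])
  have hprod : (f.roots.map (-·)).prod ≠ 0 := Multiset.prod_ne_zero fun h => by
    obtain ⟨r, hr, h⟩ := Multiset.mem_map.mp h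
    exact hroots r hr (neg_eq_zero.mp h)
  conv_lhs => rw [hf.eq_prod_roots]
  rw [reverse_mul_of_domain, reverse_C, reverse_multiset_prod_X_sub_C _ hroots, ← mul_assoc,
    ← C_mul, roots_C_mul _ (mul_ne_zero hlc hprod), roots_multiset_prod_X_sub_C]

end Reverse

theorem natDegree_eq_of_coeff_eq_coeff_sub {R : Type*} [Semiring R] {p : R[X]} {d : ℕ}
    (hdeg : p.natDegree ≤ d) (h0 : p.coeff 0 ≠ 0) (hrec : ∀ i ≤ d, p.coeff i = p.coeff (d - i)) :
    p.natDegree = d :=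
  hdeg.antisymm <| le_natDegree_of_ne_zero <| by rwa [hrec d le_rfl, Nat.sub_self]

theorem reverse_eq_self_of_coeff_eq_coeff_sub {R : Type*} [Semiring R] {p : R[X]} {d : ℕ}
    (hdeg : p.natDegree ≤ d) (h0 : p.coeff 0 ≠ 0) (hrec : ∀ i ≤ d, p.coeff i = p.coeff (d - i)) :
    p.reverse = p := by
  ext i
  rw [coeff_reverse, natDegree_eq_of_coeff_eq_coeff_sub hdeg h0 hrec]
  rcases le_or_gt i d with hi | hi
  · rw [revAt_le hi, hrec i hi]
  · rw [revAt_eq_self_of_lt hi]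

theorem coeff_zero_le_eval_of_coeff_nonneg {R : Type*} [CommSemiring R] [PartialOrder R]
    [IsOrderedRing R] {p : R[X]} (hp : ∀ i, 0 ≤ p.coeff i) {x : R} (hx : 0 ≤ x) :
    p.coeff 0 ≤ p.eval x := by
  rw [eval_eq_sum_range]
  simpa using Finset.single_le_sum (fun i _ => mul_nonneg (hp i) (pow_nonneg hx i))
    (Finset.mem_range.mpr p.natDegree.succ_pos)

theorem splits_of_forall_aeval_complex_eq_zero {p : ℝ[X]}
    (hreal : ∀ z : ℂ, aeval z p = 0 → ∃ x : ℝ, z = x) : p.Splits :=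
  Splits.of_splits_map (algebraMap ℝ ℂ) (IsAlgClosed.splits _) fun z hz => by
    obtain ⟨x, rfl⟩ := hreal z (by simpa [eval_map_algebraMap] using (mem_roots'.mp hz).2)
    exact ⟨x, rfl⟩

theorem neg_one_pow_mul_eval_nonneg_of_splits {R : Type*} [CommRing R] [LinearOrder R]
    [IsStrictOrderedRing R] {p : R[X]} (hp : p.Splits) (hm : p.Monic) (x : R) :
    0 ≤ (-1) ^ Multiset.card (p.roots.filter (x < ·)) * p.eval x := by
  have := (p.roots.map (x - ·)).zero_le_neg_one_pow_card_filter_neg_mul_prod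
  simpa only [Multiset.filter_map, Function.comp_def, Multiset.card_map, sub_neg,
    ← hp.eval_eq_prod_roots_of_monic hm] using this

end Polynomial

/-- Charney–Davis sign: let `h(t) = ∑_{i=0}^{d} h_i t^i` be a real-rooted
polynomial with non-negative coefficients, `h_0 = 1`, and reciprocal coefficients
`h_i = h_{d−i}`. Then `(−1)^{⌊d/2⌋} h(−1) ≥ 0`. -/
theorem charney_davis_sign (d : ℕ) (p : Polynomial ℝ)
    (hdeg : p.natDegree ≤ d)
    (h0 : p.coeff 0 = 1)
    (hnn : ∀ i, 0 ≤ p.coeff i)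
    (hrec : ∀ i ≤ d, p.coeff i = p.coeff (d - i))
    (hreal : ∀ z : ℂ, Polynomial.aeval z p = 0 → ∃ x : ℝ, z = (x : ℂ)) :
    0 ≤ (-1 : ℝ) ^ (d / 2) * p.eval (-1) := by
  have h0' : p.coeff 0 ≠ 0 := h0 ▸ one_ne_zero
  have hd : p.natDegree = d := natDegree_eq_of_coeff_eq_coeff_sub hdeg h0' hrec
  have hmonic : p.Monic := by rw [Monic, leadingCoeff, hd, hrec d le_rfl, Nat.sub_self, h0]
  have hsplit : p.Splits := splits_of_forall_aeval_complex_eq_zero hreal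
  have hneg : ∀ r ∈ p.roots, r < 0 := fun r hr => lt_of_not_ge fun hr0 => by
    have := coeff_zero_le_eval_of_coeff_nonneg hnn hr0
    rw [h0, (mem_roots'.mp hr).2.eq_zero] at this
    exact one_ne_zero (le_antisymm this zero_le_one)
  have hinv : p.roots.map (·⁻¹) = p.roots := by
    rw [← roots_reverse_of_splits hsplit h0', reverse_eq_self_of_coeff_eq_coeff_sub hdeg h0' hrec]
  by_cases h1 : (-1 : ℝ) ∈ p.roots
  · rw [(mem_roots'.mp h1).2.eq_zero, mul_zero]
  · have := neg_one_pow_mul_eval_nonneg_of_splits hsplit hmonic (-1)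
    rwa [Multiset.card_filter_neg_one_lt_eq_card_div_two hneg hinv h1,
      ← hsplit.natDegree_eq_card_roots, hd] at this
end
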